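/- arXiv:1904.11777 — 6 statements merged into one kernel-verified Lean document; each statement's English description precedes it below -/
import Mathlib

section
/- Every rooted tree on n vertices admits a balanced caterpillar decomposition: a root-to-leaf path B (the backbone) such that every connected component of the tree after removing the vertices of B has at most n/2 vertices. -/
/-!
Grow the backbone greedily from the root, always stepping to the neighbour of the current
endpoint `l` whose component in the remaining forest is largest. The invariant is that every
component of the forest left after removing the current path is either adjacent to `l` or has at
most half the vertices. When the path is extended by the heaviest neighbour `c`, the component of
`c` breaks into pieces adjacent to `c`, while every other component adjacent to `l` is disjoint
from that of `c` and no larger, hence has at most half the vertices. The process stops at a vertex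
with no neighbour off the path, which in a tree is a leaf, and then every component is small.
-/

namespace SimpleGraph

variable {V : Type*} {G : SimpleGraph V}

section componentAvoiding

variable {S : Set V} {x y z c : V}

def componentAvoiding (G : SimpleGraph V) (S : Set V) (x : V) : Set V :=
  {y | ∃ w : G.Walk x y, ∀ v ∈ w.support, v ∉ S}

lemma notMem_of_mem_componentAvoiding (h : y ∈ G.componentAvoiding S x) : y ∉ S :=
  h.elim fun w hw => hw y w.end_mem_support

lemma mem_componentAvoiding_self (hx : x ∉ S) : x ∈ G.componentAvoiding S x :=
  ⟨.nil, by simpa using hx⟩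

lemma mem_componentAvoiding_comm :
    y ∈ G.componentAvoiding S x ↔ x ∈ G.componentAvoiding S y := by
  constructor <;> rintro ⟨w, hw⟩ <;> exact ⟨w.reverse, by simpa using hw⟩

lemma mem_componentAvoiding_trans (hy : y ∈ G.componentAvoiding S x)
    (hz : z ∈ G.componentAvoiding S y) : z ∈ G.componentAvoiding S x := by
  obtain ⟨w₁, hw₁⟩ := hy
  obtain ⟨w₂, hw₂⟩ := hz
  refine ⟨w₁.append w₂, fun v hv => ?_⟩
  rcases (Walk.mem_support_append_iff _ _).1 hv with hv | hv
  exacts [hw₁ v hv, hw₂ v hv]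

lemma Adj.mem_componentAvoiding (hxy : G.Adj x y) (hx : x ∉ S)
    (hz : z ∈ G.componentAvoiding S y) : z ∈ G.componentAvoiding S x := by
  obtain ⟨w, hw⟩ := hz
  exact ⟨.cons hxy w, by simpa [hx] using hw⟩

lemma componentAvoiding_eq_of_mem (h : y ∈ G.componentAvoiding S x) :
    G.componentAvoiding S y = G.componentAvoiding S x :=
  Set.ext fun _ => ⟨mem_componentAvoiding_trans h,
    mem_componentAvoiding_trans (mem_componentAvoiding_comm.1 h)⟩

lemma disjoint_componentAvoiding (h : y ∉ G.componentAvoiding S x) :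
    Disjoint (G.componentAvoiding S x) (G.componentAvoiding S y) :=
  Set.disjoint_left.2 fun _ hx hy =>
    h (mem_componentAvoiding_trans hx (mem_componentAvoiding_comm.1 hy))

lemma componentAvoiding_insert_of_notMem (hc : c ∉ G.componentAvoiding S x) :
    G.componentAvoiding (insert c S) x = G.componentAvoiding S x := by
  classical
  refine Set.ext fun y => ⟨fun ⟨w, hw⟩ => ⟨w, fun v hv hvS => hw v hv (Or.inr hvS)⟩,
    fun ⟨w, hw⟩ => ⟨w, fun v hv hvS => ?_⟩⟩
  rcases hvS with rfl | hvS
  · exact hc ⟨w.takeUntil v hv, fun u hu => hw u (w.support_takeUntil_subset_support hv hu)⟩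
  · exact hw v hv hvS

lemma exists_adj_mem_componentAvoiding_insert (hc : c ∈ G.componentAvoiding S x) (hxc : x ≠ c) :
    ∃ y, G.Adj y c ∧ y ∈ G.componentAvoiding (insert c S) x := by
  obtain ⟨w, hw⟩ := hc
  induction w with
  | nil => exact absurd rfl hxc
  | @cons x u c hxu w ih =>
    have hx : x ∉ insert c S := by
      simpa [hxc] using hw x (Walk.start_mem_support _)
    by_cases huc : u = c
    · subst huc
      exact ⟨x, hxu, mem_componentAvoiding_self hx⟩
    · obtain ⟨y, hyc, hy⟩ := ih huc fun v hv => hw v (by simp [hv])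
      exact ⟨y, hyc, hxu.mem_componentAvoiding hx hy⟩

lemma image_val_supp_connectedComponentMk (hx : x ∉ S) :
    Subtype.val '' ((G.induce {w | w ∉ S}).connectedComponentMk ⟨x, hx⟩).supp =
      G.componentAvoiding S x := by
  ext y
  simp only [Set.mem_image, ConnectedComponent.mem_supp_iff, ConnectedComponent.eq]
  constructor
  · rintro ⟨y, ⟨w⟩, rfl⟩
    have hw : ∀ v ∈ (w.map (Embedding.induce {w | w ∉ S}).toHom).support, v ∉ S := by
      intro v hv
      obtain ⟨v, -, rfl⟩ := List.mem_map.1 (Walk.support_map _ w ▸ hv)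
      exact v.2
    exact mem_componentAvoiding_comm.1 ⟨_, hw⟩
  · rintro ⟨w, hw⟩
    exact ⟨⟨y, notMem_of_mem_componentAvoiding ⟨w, hw⟩⟩,
      ⟨(w.induce {w | w ∉ S} hw).reverse⟩, rfl⟩

end componentAvoiding

lemma two_mul_ncard_le_of_disjoint [Finite V] {A B : Set V} (hAB : Disjoint A B)
    (h : A.ncard ≤ B.ncard) : 2 * A.ncard ≤ Nat.card V := by
  have := Set.ncard_le_card (A ∪ B)
  rw [Set.ncard_union_eq hAB] at this
  omega

lemma IsAcyclic.degree_le_one_of_adj_mem_support (hG : G.IsAcyclic) {r l : V}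
    [Fintype (G.neighborSet l)] (p : G.Walk r l) (hp : p.IsPath)
    (hl : ∀ y, G.Adj l y → y ∈ p.support) : G.degree l ≤ 1 := by
  classical
  -- each neighbour `y` on `p` closes a path `r ⋯ y l`, and such paths are unique in a forest
  have hpath : ∀ y (hly : G.Adj l y), ((p.takeUntil y (hl y hly)).concat hly.symm).IsPath :=
    fun y hly => (hp.takeUntil _).concat
      (Walk.endpoint_notMem_support_takeUntil hp _ hly.ne) hly.symm
  rw [← card_neighborFinset_eq_degree, Finset.card_le_one]
  intro y hy z hz
  rw [mem_neighborFinset] at hy hz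
  have := hG.subsingleton_path r l
  have := congrArg Subtype.val (Subsingleton.elim ⟨_, hpath y hy⟩ ⟨_, hpath z hz⟩)
  exact (Walk.concat_inj this).1

section balanced

variable {S : Set V} {l c : V}

lemma Walk.setOf_mem_support_concat {r : V} (p : G.Walk r l) (h : G.Adj l c) :
    {v | v ∈ (p.concat h).support} = insert c {v | v ∈ p.support} := by
  ext v
  simp [Walk.support_concat, or_comm]

variable [Fintype V]

def IsBalancedSeparator (G : SimpleGraph V) (S : Set V) : Prop :=
  ∀ C : (G.induce {w | w ∉ S}).ConnectedComponent, 2 * C.supp.ncard ≤ Fintype.card V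

def IsBalancedAwayFrom (G : SimpleGraph V) (S : Set V) (l : V) : Prop :=
  ∀ x ∉ S, (∀ y ∈ G.componentAvoiding S x, ¬ G.Adj l y) →
    2 * (G.componentAvoiding S x).ncard ≤ Fintype.card V

lemma Preconnected.isBalancedAwayFrom_singleton (hG : G.Preconnected) (r : V) :
    G.IsBalancedAwayFrom {r} r := by
  intro x hx hfar
  obtain ⟨w⟩ := hG x r
  obtain ⟨y, hyr, hy⟩ := exists_adj_mem_componentAvoiding_insert (S := ∅)
    ⟨w, fun _ _ => Set.notMem_empty _⟩ hx
  exact absurd hyr.symm (hfar y (by simpa using hy))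

lemma IsBalancedAwayFrom.insert_of_forall_le (h : G.IsBalancedAwayFrom S l)
    (hmax : ∀ y, G.Adj l y → y ∉ S →
      (G.componentAvoiding S y).ncard ≤ (G.componentAvoiding S c).ncard) :
    G.IsBalancedAwayFrom (insert c S) c := by
  intro x hx hfar
  have hxS : x ∉ S := fun h => hx (Set.mem_insert_of_mem c h)
  have hcx : c ∉ G.componentAvoiding S x := fun hcx =>
    have ⟨y, hyc, hy⟩ := exists_adj_mem_componentAvoiding_insert hcx
      fun h => hx (Set.mem_insert_iff.2 (.inl h))
    hfar y hy hyc.symm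
  rw [componentAvoiding_insert_of_notMem hcx] at hfar ⊢
  by_cases hnear : ∃ y ∈ G.componentAvoiding S x, G.Adj l y
  · obtain ⟨y, hy, hly⟩ := hnear
    rw [← componentAvoiding_eq_of_mem hy] at hcx ⊢
    rw [← Nat.card_eq_fintype_card]
    exact two_mul_ncard_le_of_disjoint (disjoint_componentAvoiding hcx)
      (hmax y hly (notMem_of_mem_componentAvoiding hy))
  · push Not at hnear
    exact h x hxS hnear

lemma IsBalancedAwayFrom.isBalancedSeparator (h : G.IsBalancedAwayFrom S l)
    (hl : ∀ y, G.Adj l y → y ∈ S) : G.IsBalancedSeparator S := by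
  intro C
  induction C using ConnectedComponent.ind with | h x =>
  obtain ⟨x, hx⟩ := x
  rw [← Set.ncard_image_of_injective _ Subtype.val_injective,
    image_val_supp_connectedComponentMk]
  exact h x hx fun y hy hly => notMem_of_mem_componentAvoiding hy (hl y hly)

variable [DecidableRel G.Adj]

theorem IsAcyclic.exists_isPath_isBalancedSeparator_of_isBalancedAwayFrom (hG : G.IsAcyclic)
    {r l : V} (p : G.Walk r l) (hp : p.IsPath) (h : G.IsBalancedAwayFrom {v | v ∈ p.support} l) :
    ∃ (l' : V) (q : G.Walk r l'), q.IsPath ∧ G.degree l' ≤ 1 ∧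
      G.IsBalancedSeparator {v | v ∈ q.support} := by
  by_cases hext : ∃ c, G.Adj l c ∧ c ∉ p.support
  · obtain ⟨c, ⟨hlc, hc⟩, hmax⟩ := Set.exists_max_image {c | G.Adj l c ∧ c ∉ p.support}
      (fun c => (G.componentAvoiding {v | v ∈ p.support} c).ncard) (Set.toFinite _) hext
    have hp' := hp.concat hc hlc
    refine hG.exists_isPath_isBalancedSeparator_of_isBalancedAwayFrom (p.concat hlc) hp' ?_
    rw [Walk.setOf_mem_support_concat]
    exact h.insert_of_forall_le fun y hly hy => hmax y ⟨hly, hy⟩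
  · push Not at hext
    exact ⟨l, p, hp, hG.degree_le_one_of_adj_mem_support p hp hext,
      h.isBalancedSeparator hext⟩
termination_by Fintype.card V - p.length
decreasing_by
  have := hp'.length_lt
  rw [Walk.length_concat] at this ⊢
  omega

end balanced

end SimpleGraph

open SimpleGraph

theorem stmt1_general {V : Type*} [Fintype V] (G : SimpleGraph V)
    [DecidableRel G.Adj] (hT : G.IsTree) (r : V) :
    ∃ (l : V) (p : G.Walk r l), p.IsPath ∧ G.degree l ≤ 1 ∧
      ∀ C : (G.induce {w : V | w ∉ p.support}).ConnectedComponent,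
        2 * C.supp.ncard ≤ Fintype.card V :=
  hT.isAcyclic.exists_isPath_isBalancedSeparator_of_isBalancedAwayFrom .nil .nil
    (by simpa using hT.connected.preconnected.isBalancedAwayFrom_singleton r)

/-- Every rooted tree on `n` vertices admits a balanced caterpillar decomposition:
a root-to-leaf path `B` (the backbone) such that every connected component of the
tree after removing the vertices of `B` has at most `n/2` vertices. -/
theorem stmt1 {V : Type*} [Fintype V] [DecidableEq V] (G : SimpleGraph V)
    [DecidableRel G.Adj] (hT : G.IsTree) (r : V) :
    ∃ (l : V) (p : G.Walk r l), p.IsPath ∧ G.degree l ≤ 1 ∧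
      ∀ C : (G.induce {w : V | w ∉ p.support}).ConnectedComponent,
        2 * C.supp.ncard ≤ Fintype.card V :=
  stmt1_general G hT r
end

section
/- Every tree on n vertices admits a rooted path decomposition of width O(log n); more precisely, there exists a partition of the edge set into edge-disjoint paths, an orientation by a root r, such that each path in the partition has the least common ancestor of its vertices as one of its endpoints, and every path in the tree intersects (shares an edge with) at most 2⌈log₂ n⌉ + 1 of the paths in the partition. -/
open SimpleGraph Walk
set_option linter.unusedSectionVars false

namespace PD

variable {V : Type*} [Fintype V] [DecidableEq V] {G : SimpleGraph V}

noncomputable def pth (hT : G.IsTree) (r v : V) : G.Walk v r :=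
  (hT.existsUnique_path v r).exists.choose

lemma pth_isPath (hT : G.IsTree) (r v : V) : (pth hT r v).IsPath :=
  (hT.existsUnique_path v r).exists.choose_spec

lemma pth_unique (hT : G.IsTree) (r v : V) (p : G.Walk v r) (hp : p.IsPath) :
    p = pth hT r v := by
  obtain ⟨q, _, hq⟩ := hT.existsUnique_path v r
  rw [hq p hp, hq _ (pth_isPath hT r v)]

lemma pth_r (hT : G.IsTree) (r : V) : pth hT r r = Walk.nil :=
  (pth_unique hT r r Walk.nil (by simp)).symm

noncomputable def depth (hT : G.IsTree) (r v : V) : ℕ := (pth hT r v).length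

noncomputable def par (hT : G.IsTree) (r v : V) : V := (pth hT r v).getVert 1

lemma pth_not_nil (hT : G.IsTree) {r v : V} (hv : v ≠ r) : ¬ (pth hT r v).Nil :=
  Walk.not_nil_of_ne hv

lemma adj_par (hT : G.IsTree) {r v : V} (hv : v ≠ r) : G.Adj v (par hT r v) :=
  Walk.adj_snd (pth_not_nil hT hv)

lemma pth_eq_cons (hT : G.IsTree) {r v : V} (hv : v ≠ r) :
    pth hT r v = Walk.cons (adj_par hT hv) (pth hT r (par hT r v)) := by
  have hnil := pth_not_nil hT (r := r) hv
  have htail : (pth hT r v).tail = pth hT r (par hT r v) := by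
    apply pth_unique
    exact (pth_isPath hT r v).tail
  conv_lhs => rw [← Walk.cons_tail_eq (pth hT r v) hnil]
  rw [htail]
  rfl

lemma depth_r (hT : G.IsTree) (r : V) : depth hT r r = 0 := by
  simp [depth, pth_r]

lemma depth_par (hT : G.IsTree) {r v : V} (hv : v ≠ r) :
    depth hT r v = depth hT r (par hT r v) + 1 := by
  have := pth_eq_cons hT (r := r) hv
  simp [depth, this]


lemma pth_dropUntil (hT : G.IsTree) {r v a : V} (ha : a ∈ (pth hT r v).support) :
    (pth hT r v).dropUntil a ha = pth hT r a :=
  pth_unique hT r a _ ((pth_isPath hT r v).dropUntil ha)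


lemma depth_le_of_mem (hT : G.IsTree) {r v a : V} (ha : a ∈ (pth hT r v).support) :
    depth hT r a ≤ depth hT r v := by
  have := congrArg Walk.length ((pth hT r v).take_spec ha)
  rw [Walk.length_append, pth_dropUntil hT ha] at this
  unfold depth; omega

lemma depth_lt_of_mem (hT : G.IsTree) {r v a : V} (ha : a ∈ (pth hT r v).support)
    (hne : a ≠ v) : depth hT r a < depth hT r v := by
  have := congrArg Walk.length ((pth hT r v).take_spec ha)
  rw [Walk.length_append, pth_dropUntil hT ha] at this
  have h0 : ((pth hT r v).takeUntil a ha).length ≠ 0 := fun h =>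
    hne (Walk.eq_of_length_eq_zero h).symm
  unfold depth; omega

-- descendants set
def desc (hT : G.IsTree) (r a : V) : Set V := {v | a ∈ (pth hT r v).support}

lemma mem_desc_self (hT : G.IsTree) (r v : V) : v ∈ desc hT r v :=
  Walk.start_mem_support _

lemma mem_desc_r (hT : G.IsTree) (r v : V) : v ∈ desc hT r r :=
  Walk.end_mem_support _

lemma pth_support_subset_of_mem (hT : G.IsTree) {r v a : V}
    (ha : a ∈ (pth hT r v).support) : (pth hT r a).support ⊆ (pth hT r v).support := by
  rw [← pth_dropUntil hT ha]
  exact Walk.support_dropUntil_subset _ _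

lemma desc_trans (hT : G.IsTree) {r a b : V} (h : b ∈ desc hT r a) :
    desc hT r b ⊆ desc hT r a := fun x hx => pth_support_subset_of_mem hT hx h


lemma depth_pos (hT : G.IsTree) {r v : V} (hv : v ≠ r) : 0 < depth hT r v := by
  have := depth_par hT (r := r) hv; omega

lemma par_mem_pth (hT : G.IsTree) {r v : V} (hv : v ≠ r) :
    par hT r v ∈ (pth hT r v).support := by
  rw [pth_eq_cons hT hv, Walk.support_cons]
  exact List.mem_cons_of_mem _ (Walk.start_mem_support _)

lemma mem_desc_par (hT : G.IsTree) {r v : V} (hv : v ≠ r) :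
    v ∈ desc hT r (par hT r v) := par_mem_pth hT hv

lemma desc_subset_par (hT : G.IsTree) {r v : V} (hv : v ≠ r) :
    desc hT r v ⊆ desc hT r (par hT r v) :=
  desc_trans hT (mem_desc_par hT hv)

lemma par_not_mem_desc (hT : G.IsTree) {r v : V} (hv : v ≠ r) :
    par hT r v ∉ desc hT r v := by
  intro h
  have := depth_le_of_mem hT h
  have := depth_par hT (r := r) hv
  omega

-- comparability of two vertices on a root path
lemma comparable_of_mem (hT : G.IsTree) (r : V) :
    ∀ x a b : V, a ∈ (pth hT r x).support → b ∈ (pth hT r x).support →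
      a ∈ (pth hT r b).support ∨ b ∈ (pth hT r a).support := by
  intro x
  generalize hx : depth hT r x = d
  induction d using Nat.strong_induction_on generalizing x with
  | _ d ih =>
    intro a b ha hb
    by_cases hxr : x = r
    · subst hxr
      rw [pth_r] at ha hb
      simp only [Walk.support_nil, List.mem_singleton] at ha hb
      subst ha; subst hb; left; exact Walk.start_mem_support _
    · rw [pth_eq_cons hT hxr, Walk.support_cons, List.mem_cons] at ha hb
      rcases ha with ha | ha
      · subst ha
        right
        rcases hb with hb | hb
        · subst hb; exact Walk.start_mem_support _
        · exact pth_support_subset_of_mem hT (par_mem_pth hT hxr) hb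
      · rcases hb with hb | hb
        · subst hb
          left
          exact pth_support_subset_of_mem hT (par_mem_pth hT hxr) ha
        · exact ih (depth hT r (par hT r x))
            (by rw [← hx]; have := depth_par hT (r := r) hxr; omega) _ rfl a b ha hb

-- children
noncomputable def childs (hT : G.IsTree) (r w : V) : Finset V :=
  Finset.univ.filter (fun v => v ≠ r ∧ par hT r v = w)

lemma mem_childs {hT : G.IsTree} {r w v : V} :
    v ∈ childs hT r w ↔ v ≠ r ∧ par hT r v = w := by simp [childs]

lemma desc_disj (hT : G.IsTree) {r w u v : V} (hu : u ∈ childs hT r w)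
    (hv : v ∈ childs hT r w) (huv : u ≠ v) :
    Disjoint (desc hT r u) (desc hT r v) := by
  rw [Set.disjoint_left]
  intro x hxu hxv
  obtain ⟨hu1, hu2⟩ := mem_childs.mp hu
  obtain ⟨hv1, hv2⟩ := mem_childs.mp hv
  rcases comparable_of_mem hT r x u v hxu hxv with h | h
  · -- u ∈ pth v support
    rw [pth_eq_cons hT hv1, Walk.support_cons, List.mem_cons] at h
    rcases h with h | h
    · exact huv h
    · have := depth_le_of_mem hT h
      rw [hv2] at this
      have h2 := depth_par hT (r := r) hu1
      rw [hu2] at h2; omega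
  · rw [pth_eq_cons hT hu1, Walk.support_cons, List.mem_cons] at h
    rcases h with h | h
    · exact huv h.symm
    · have := depth_le_of_mem hT h
      rw [hu2] at this
      have h2 := depth_par hT (r := r) hv1
      rw [hv2] at h2; omega

noncomputable def sz (hT : G.IsTree) (r v : V) : ℕ := (desc hT r v).ncard

lemma sz_pos (hT : G.IsTree) (r v : V) : 0 < sz hT r v :=
  (Set.ncard_pos (Set.toFinite _)).mpr ⟨v, mem_desc_self hT r v⟩

lemma sz_lt_par (hT : G.IsTree) {r v : V} (hv : v ≠ r) :
    sz hT r v < sz hT r (par hT r v) := by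
  apply Set.ncard_lt_ncard _ (Set.toFinite _)
  constructor
  · exact desc_subset_par hT hv
  · intro h
    exact par_not_mem_desc hT hv (h (mem_desc_self hT r (par hT r v)))

lemma sz_le_card (hT : G.IsTree) (r v : V) : sz hT r v ≤ Fintype.card V := by
  simpa [sz, Set.ncard_univ] using Set.ncard_le_ncard (Set.subset_univ (desc hT r v)) (Set.toFinite _)

-- heavy child
noncomputable def hvy (hT : G.IsTree) (r w : V) : V :=
  if h : (childs hT r w).Nonempty then
    ((childs hT r w).exists_max_image (sz hT r) h).choose
  else w

lemma hvy_spec (hT : G.IsTree) {r w : V} (h : (childs hT r w).Nonempty) :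
    hvy hT r w ∈ childs hT r w ∧ ∀ c ∈ childs hT r w, sz hT r c ≤ sz hT r (hvy hT r w) := by
  rw [hvy, dif_pos h]
  obtain ⟨hm, hmax⟩ := ((childs hT r w).exists_max_image (sz hT r) h).choose_spec
  exact ⟨hm, hmax⟩

lemma doubling (hT : G.IsTree) {r w v : V} (hv : v ∈ childs hT r w)
    (hlight : v ≠ hvy hT r w) : 2 * sz hT r v < sz hT r w := by
  have hne : (childs hT r w).Nonempty := ⟨v, hv⟩
  obtain ⟨hmem, hmax⟩ := hvy_spec hT hne
  obtain ⟨hv1, hv2⟩ := mem_childs.mp hv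
  obtain ⟨hm1, hm2⟩ := mem_childs.mp hmem
  have hdisj := desc_disj hT hv hmem hlight
  have hsub : desc hT r v ∪ desc hT r (hvy hT r w) ⊆ desc hT r w := by
    apply Set.union_subset
    · have := desc_subset_par hT hv1; rwa [hv2] at this
    · have := desc_subset_par hT hm1; rwa [hm2] at this
  have hw : w ∉ desc hT r v ∪ desc hT r (hvy hT r w) := by
    intro h
    rcases h with h | h
    · have := depth_le_of_mem hT h
      have h2 := depth_par hT (r := r) hv1
      rw [hv2] at h2; omega
    · have := depth_le_of_mem hT h
      have h2 := depth_par hT (r := r) hm1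
      rw [hm2] at h2; omega
  have hcard : sz hT r v + sz hT r (hvy hT r w) + 1 ≤ sz hT r w := by
    have h1 : (desc hT r v ∪ desc hT r (hvy hT r w)).ncard
        = sz hT r v + sz hT r (hvy hT r w) :=
      Set.ncard_union_eq hdisj (Set.toFinite _) (Set.toFinite _)
    have h2 : (insert w (desc hT r v ∪ desc hT r (hvy hT r w))).ncard
        = sz hT r v + sz hT r (hvy hT r w) + 1 := by
      rw [Set.ncard_insert_of_notMem hw (Set.toFinite _), h1]
    rw [← h2]
    apply Set.ncard_le_ncard _ (Set.toFinite _)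
    apply Set.insert_subset (mem_desc_self hT r w) hsub
  have := hmax v hv
  omega

lemma adj_child (hT : G.IsTree) {r w c : V} (hc : c ∈ childs hT r w) : G.Adj w c := by
  obtain ⟨h1, h2⟩ := mem_childs.mp hc
  have := adj_par hT (r := r) h1
  rw [h2] at this
  exact this.symm

lemma hvy_mem (hT : G.IsTree) {r w : V} (h : (childs hT r w).Nonempty) :
    hvy hT r w ∈ childs hT r w := (hvy_spec hT h).1

lemma sz_hvy_lt (hT : G.IsTree) {r w : V} (h : (childs hT r w).Nonempty) :
    sz hT r (hvy hT r w) < sz hT r w := by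
  obtain ⟨h1, h2⟩ := mem_childs.mp (hvy_mem hT h)
  have := sz_lt_par hT (r := r) h1
  rwa [h2] at this

/-- top of the heavy run through `v`. -/
noncomputable def rt (hT : G.IsTree) (r : V) (v : V) : V :=
  if h : v = r then r
  else if v = hvy hT r (par hT r v) then rt hT r (par hT r v) else v
termination_by depth hT r v
decreasing_by
  · have := depth_par hT (r := r) h; omega

lemma rt_r (hT : G.IsTree) (r : V) : rt hT r r = r := by rw [rt, dif_pos rfl]

lemma rt_light (hT : G.IsTree) {r v : V} (hv : v ≠ r) (hl : v ≠ hvy hT r (par hT r v)) :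
    rt hT r v = v := by rw [rt, dif_neg hv, if_neg hl]

lemma rt_heavy (hT : G.IsTree) {r v : V} (hv : v ≠ r) (hh : v = hvy hT r (par hT r v)) :
    rt hT r v = rt hT r (par hT r v) := by rw [rt, dif_neg hv, if_pos hh]

lemma rt_cases (hT : G.IsTree) (r v : V) :
    rt hT r (rt hT r v) = rt hT r v := by
  generalize hx : depth hT r v = d
  induction d using Nat.strong_induction_on generalizing v with
  | _ d ih =>
    by_cases hv : v = r
    · subst hv; rw [rt_r, rt_r]
    · by_cases hl : v = hvy hT r (par hT r v)
      · rw [rt_heavy hT hv hl]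
        exact ih (depth hT r (par hT r v)) (by have := depth_par hT (r := r) hv; omega) _ rfl
      · rw [rt_light hT hv hl, rt_light hT hv hl]

/-- heavy chain downward from `v`. -/
noncomputable def chainW (hT : G.IsTree) (r : V) (v : V) : Σ b, G.Walk v b :=
  if h : (childs hT r v).Nonempty then
    ⟨(chainW hT r (hvy hT r v)).1,
      Walk.cons (adj_child hT (hvy_mem hT h)) (chainW hT r (hvy hT r v)).2⟩
  else ⟨v, Walk.nil⟩
termination_by sz hT r v
decreasing_by
  · exact sz_hvy_lt hT h

lemma chainW_support_subset (hT : G.IsTree) (r v : V) :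
    ∀ x ∈ ((chainW hT r v).2).support, x ∈ desc hT r v := by
  generalize hx : sz hT r v = d
  induction d using Nat.strong_induction_on generalizing v with
  | _ d ih =>
    rw [chainW]
    by_cases h : (childs hT r v).Nonempty
    · rw [dif_pos h]
      intro x hx'
      rw [Walk.support_cons, List.mem_cons] at hx'
      rcases hx' with hx' | hx'
      · rw [hx']; exact mem_desc_self hT r v
      · have hsub := ih (sz hT r (hvy hT r v)) (by have := sz_hvy_lt hT h; omega) _ rfl
        have hd : x ∈ desc hT r (hvy hT r v) := hsub x hx'
        obtain ⟨h1, h2⟩ := mem_childs.mp (hvy_mem hT h)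
        have := desc_subset_par hT h1
        rw [h2] at this
        exact this hd
    · rw [dif_neg h]
      intro x hx'
      simp only [Walk.support_nil, List.mem_singleton] at hx'
      rw [hx']; exact mem_desc_self hT r v

lemma chainW_isPath (hT : G.IsTree) (r v : V) : ((chainW hT r v).2).IsPath := by
  generalize hx : sz hT r v = d
  induction d using Nat.strong_induction_on generalizing v with
  | _ d ih =>
    rw [chainW]
    by_cases h : (childs hT r v).Nonempty
    · rw [dif_pos h]
      apply Walk.IsPath.cons
      · exact ih (sz hT r (hvy hT r v)) (by have := sz_hvy_lt hT h; omega) _ rfl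
      · intro hmem
        have := chainW_support_subset hT r (hvy hT r v) _ hmem
        have hle := depth_le_of_mem hT this
        obtain ⟨h1, h2⟩ := mem_childs.mp (hvy_mem hT h)
        have := depth_par hT (r := r) h1
        rw [h2] at this; omega
    · rw [dif_neg h]; simp

lemma rt_of_head (hT : G.IsTree) {r x : V} (hx : x ≠ r)
    (hh : x = hvy hT r (par hT r x)) : rt hT r x = rt hT r (par hT r x) :=
  rt_heavy hT hx hh

lemma chainW_edges_sub (hT : G.IsTree) (r v : V) :
    ∀ e ∈ ((chainW hT r v).2).edges, ∃ x, x ≠ r ∧ x = hvy hT r (par hT r x) ∧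
      rt hT r x = rt hT r v ∧ e = s(par hT r x, x) := by
  generalize hs : sz hT r v = d
  induction d using Nat.strong_induction_on generalizing v with
  | _ d ih =>
    intro e he
    rw [chainW] at he
    by_cases h : (childs hT r v).Nonempty
    · rw [dif_pos h] at he
      rw [Walk.edges_cons, List.mem_cons] at he
      obtain ⟨h1, h2⟩ := mem_childs.mp (hvy_mem hT h)
      have hh : hvy hT r v = hvy hT r (par hT r (hvy hT r v)) := by rw [h2]
      have hrt : rt hT r (hvy hT r v) = rt hT r v := by
        rw [rt_heavy hT h1 hh, h2]
      rcases he with he | he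
      · exact ⟨hvy hT r v, h1, hh, hrt, by rw [h2]; exact he⟩
      · obtain ⟨x, hx1, hx2, hx3, hx4⟩ :=
          ih (sz hT r (hvy hT r v)) (by have := sz_hvy_lt hT h; omega) _ rfl e he
        exact ⟨x, hx1, hx2, by rw [hx3, hrt], hx4⟩
    · rw [dif_neg h] at he
      simp at he

lemma chain_continue (hT : G.IsTree) (r w : V) :
    ∀ u ∈ ((chainW hT r w).2).support, (childs hT r u).Nonempty →
      s(u, hvy hT r u) ∈ ((chainW hT r w).2).edges := by
  generalize hs : sz hT r w = d
  induction d using Nat.strong_induction_on generalizing w with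
  | _ d ih =>
    intro u hu hcu
    rw [chainW] at hu ⊢
    by_cases h : (childs hT r w).Nonempty
    · rw [dif_pos h] at hu ⊢
      rw [Walk.support_cons, List.mem_cons] at hu
      rw [Walk.edges_cons, List.mem_cons]
      rcases hu with hu | hu
      · left; rw [hu]
      · right
        exact ih (sz hT r (hvy hT r w)) (by have := sz_hvy_lt hT h; omega) _ rfl u hu hcu
    · rw [dif_neg h] at hu
      simp only [Walk.support_nil, List.mem_singleton] at hu
      rw [hu] at hcu
      exact absurd hcu h

lemma edge_mem_chain_rt (hT : G.IsTree) (r : V) :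
    ∀ x, x ≠ r → x = hvy hT r (par hT r x) →
      s(par hT r x, x) ∈ ((chainW hT r (rt hT r x)).2).edges := by
  intro x
  generalize hD : depth hT r x = d
  induction d using Nat.strong_induction_on generalizing x with
  | _ d ih =>
    intro hx hh
    have hrt : rt hT r x = rt hT r (par hT r x) := rt_heavy hT hx hh
    have hcx : x ∈ childs hT r (par hT r x) := mem_childs.mpr ⟨hx, rfl⟩
    have hcne : (childs hT r (par hT r x)).Nonempty := ⟨x, hcx⟩
    by_cases hp : par hT r x = r ∨ (par hT r x ≠ r ∧ par hT r x ≠ hvy hT r (par hT r (par hT r x)))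
    · -- par x is a head: rt (par x) = par x
      have hrp : rt hT r (par hT r x) = par hT r x := by
        rcases hp with hp | ⟨hp1, hp2⟩
        · rw [hp, rt_r]
        · exact rt_light hT hp1 hp2
      rw [hrt, hrp]
      rw [chainW, dif_pos hcne, Walk.edges_cons, List.mem_cons]
      left
      rw [← hh]
    · push_neg at hp
      obtain ⟨hp1, hp2⟩ := hp
      have hp2' := hp2 hp1
      have hmem := ih (depth hT r (par hT r x))
        (by have := depth_par hT (r := r) hx; omega) _ rfl hp1 hp2'
      have hsup : par hT r x ∈ ((chainW hT r (rt hT r (par hT r x))).2).support :=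
        Walk.snd_mem_support_of_mem_edges _ hmem
      have := chain_continue hT r (rt hT r (par hT r x)) (par hT r x) hsup hcne
      rw [← hh] at this
      rw [hrt]
      exact this

lemma child_repr_unique (hT : G.IsTree) {r x y : V} (hx : x ≠ r) (hy : y ≠ r)
    (h : s(par hT r x, x) = s(par hT r y, y)) : x = y := by
  rw [Sym2.eq_iff] at h
  rcases h with ⟨h1, h2⟩ | ⟨h1, h2⟩
  · exact h2
  · exfalso
    have dx := depth_par hT (r := r) hx
    have dy := depth_par hT (r := r) hy
    rw [h1] at dx
    rw [← h2] at dy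
    omega

lemma pth_ne_nil_cons (hT : G.IsTree) {r a b : V} (h : G.Adj a b)
    (hnb : a ∉ (pth hT r b).support) : a ≠ r ∧ par hT r a = b := by
  have hpath : (Walk.cons h (pth hT r b)).IsPath :=
    ((pth_isPath hT r b).cons hnb)
  have heq : Walk.cons h (pth hT r b) = pth hT r a := pth_unique hT r a _ hpath
  constructor
  · intro har
    subst har
    rw [pth_r] at heq
    simp at heq
  · rw [par, ← heq, Walk.getVert_cons_succ, Walk.getVert_zero]

lemma adj_parent_or (hT : G.IsTree) (r : V) {a b : V} (h : G.Adj a b) :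
    (a ≠ r ∧ par hT r a = b) ∨ (b ≠ r ∧ par hT r b = a) := by
  by_cases ha : a ∈ (pth hT r b).support
  · right
    apply pth_ne_nil_cons hT h.symm
    intro hb
    have h1 := depth_lt_of_mem hT ha h.ne
    have h2 := depth_lt_of_mem hT hb h.ne'
    omega
  · left
    exact pth_ne_nil_cons hT h ha

/-- top endpoint of the decomposition path indexed by head `h`. -/
noncomputable def Aof (hT : G.IsTree) (r h : V) : V := if h = r then r else par hT r h

noncomputable def Bof (hT : G.IsTree) (r h : V) : V := (chainW hT r h).1

/-- the decomposition path with head `h`. -/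
noncomputable def Qof (hT : G.IsTree) (r h : V) : G.Walk (Aof hT r h) (Bof hT r h) :=
  if hh : h = r then
    ((chainW hT r h).2).copy (by rw [Aof, if_pos hh, hh]) (by rw [Bof])
  else
    (Walk.cons (adj_par hT hh).symm ((chainW hT r h).2)).copy
      (by rw [Aof, if_neg hh]) (by rw [Bof])

lemma par_not_mem_chain (hT : G.IsTree) {r h : V} (hh : h ≠ r) :
    par hT r h ∉ ((chainW hT r h).2).support := by
  intro hmem
  exact par_not_mem_desc hT hh (chainW_support_subset hT r h _ hmem)

lemma Qof_isPath (hT : G.IsTree) (r h : V) : (Qof hT r h).IsPath := by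
  rw [Qof]
  by_cases hh : h = r
  · rw [dif_pos hh, Walk.isPath_copy]
    exact chainW_isPath hT r h
  · rw [dif_neg hh, Walk.isPath_copy]
    exact (chainW_isPath hT r h).cons (par_not_mem_chain hT hh)

lemma Qof_edges_iff (hT : G.IsTree) {r h : V} (hhead : rt hT r h = h) (e : Sym2 V) :
    e ∈ (Qof hT r h).edges ↔
      ∃ x, x ≠ r ∧ rt hT r x = h ∧ e = s(par hT r x, x) := by
  constructor
  · intro he
    rw [Qof] at he
    by_cases hh : h = r
    · rw [dif_pos hh, Walk.edges_copy] at he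
      obtain ⟨x, hx1, _, hx3, hx4⟩ := chainW_edges_sub hT r h e he
      refine ⟨x, hx1, ?_, hx4⟩
      rw [hx3, hhead]
    · rw [dif_neg hh, Walk.edges_copy, Walk.edges_cons, List.mem_cons] at he
      rcases he with he | he
      · exact ⟨h, hh, hhead, by rw [he]⟩
      · obtain ⟨x, hx1, _, hx3, hx4⟩ := chainW_edges_sub hT r h e he
        exact ⟨x, hx1, by rw [hx3, hhead], hx4⟩
  · rintro ⟨x, hx1, hx2, rfl⟩
    by_cases hxh : x = hvy hT r (par hT r x)
    · have := edge_mem_chain_rt hT r x hx1 hxh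
      rw [hx2] at this
      rw [Qof]
      by_cases hh : h = r
      · rw [dif_pos hh, Walk.edges_copy]
        exact this
      · rw [dif_neg hh, Walk.edges_copy, Walk.edges_cons, List.mem_cons]
        right; exact this
    · have hxx : rt hT r x = x := rt_light hT hx1 hxh
      have hxh' : x = h := by rw [← hx2, hxx]
      subst hxh'
      rw [Qof, dif_neg hx1, Walk.edges_copy, Walk.edges_cons, List.mem_cons]
      left
      rfl

lemma Qof_mem_unique (hT : G.IsTree) {r h h' : V} (hh : rt hT r h = h)
    (hh' : rt hT r h' = h') {e : Sym2 V} (he : e ∈ (Qof hT r h).edges)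
    (he' : e ∈ (Qof hT r h').edges) : h = h' := by
  obtain ⟨x, hx1, hx2, hx3⟩ := (Qof_edges_iff hT hh e).mp he
  obtain ⟨y, hy1, hy2, hy3⟩ := (Qof_edges_iff hT hh' e).mp he'
  have : x = y := child_repr_unique hT hx1 hy1 (by rw [← hx3, ← hy3])
  rw [← hx2, ← hy2, this]

lemma Qof_support_anc (hT : G.IsTree) (r h : V) :
    ∀ v ∈ (Qof hT r h).support, Aof hT r h ∈ (pth hT r v).support := by
  intro v hv
  rw [Qof] at hv
  by_cases hh : h = r
  · rw [Aof, if_pos hh]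
    exact Walk.end_mem_support _
  · rw [dif_neg hh, Walk.support_copy, Walk.support_cons, List.mem_cons] at hv
    rw [Aof, if_neg hh]
    rcases hv with hv | hv
    · rw [hv]; exact Walk.start_mem_support _
    · have hdesc : v ∈ desc hT r h := chainW_support_subset hT r h _ hv
      exact desc_subset_par hT hh hdesc

/-- number of light vertices among `x, par x, ..., par^[s-1] x`. -/
noncomputable def Lc (hT : G.IsTree) (r : V) : V → ℕ → ℕ
  | _, 0 => 0
  | x, s + 1 =>
    (if x ≠ r ∧ x ≠ hvy hT r (par hT r x) then 1 else 0) + Lc hT r (par hT r x) s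

lemma sz_doubling' (hT : G.IsTree) {r x : V} (hx : x ≠ r)
    (hl : x ≠ hvy hT r (par hT r x)) : 2 * sz hT r x < sz hT r (par hT r x) :=
  doubling hT (mem_childs.mpr ⟨hx, rfl⟩) hl

lemma SZ (hT : G.IsTree) (r : V) :
    ∀ (s : ℕ) (x : V), (∀ j < s, (par hT r)^[j] x ≠ r) →
      2 ^ Lc hT r x s * sz hT r x ≤ sz hT r ((par hT r)^[s] x) := by
  intro s
  induction s with
  | zero => intro x _; simp [Lc]
  | succ s ih =>
    intro x hC
    have hx : x ≠ r := by simpa using hC 0 (Nat.succ_pos s)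
    have hC' : ∀ j < s, (par hT r)^[j] (par hT r x) ≠ r := by
      intro j hj
      have := hC (j + 1) (by omega)
      rwa [Function.iterate_succ_apply] at this
    have hstep : 2 ^ (if x ≠ r ∧ x ≠ hvy hT r (par hT r x) then 1 else 0) * sz hT r x
        ≤ sz hT r (par hT r x) := by
      by_cases hl : x ≠ hvy hT r (par hT r x)
      · rw [if_pos ⟨hx, hl⟩]
        have := sz_doubling' hT hx hl
        omega
      · rw [if_neg (by tauto)]
        have := sz_lt_par hT (r := r) hx
        omega
    calc 2 ^ Lc hT r x (s + 1) * sz hT r x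
        = 2 ^ Lc hT r (par hT r x) s *
          ((2 ^ (if x ≠ r ∧ x ≠ hvy hT r (par hT r x) then 1 else 0)) * sz hT r x) := by
          rw [Lc, pow_add]; ring
      _ ≤ 2 ^ Lc hT r (par hT r x) s * sz hT r (par hT r x) :=
          Nat.mul_le_mul_left _ hstep
      _ ≤ sz hT r ((par hT r)^[s] (par hT r x)) := ih (par hT r x) hC'
      _ = sz hT r ((par hT r)^[s+1] x) := by rw [Function.iterate_succ_apply]

/-- set of heads met along the upward chain of length `s` from `x`. -/
def Sset (hT : G.IsTree) (r : V) (x : V) (s : ℕ) : Set V :=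
  {h | ∃ j < s, h = rt hT r ((par hT r)^[j] x)}

lemma Sset_zero (hT : G.IsTree) (r x : V) : Sset hT r x 0 = ∅ := by
  ext h; simp [Sset]

lemma Sset_succ (hT : G.IsTree) (r x : V) (s : ℕ) :
    Sset hT r x (s + 1) = insert (rt hT r x) (Sset hT r (par hT r x) s) := by
  ext h
  simp only [Sset, Set.mem_setOf_eq, Set.mem_insert_iff]
  constructor
  · rintro ⟨j, hj, rfl⟩
    cases j with
    | zero => left; rfl
    | succ j => right; exact ⟨j, by omega, by rw [Function.iterate_succ_apply]⟩
  · rintro (rfl | ⟨j, hj, rfl⟩)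
    · exact ⟨0, by omega, rfl⟩
    · exact ⟨j + 1, by omega, by rw [Function.iterate_succ_apply]⟩

lemma CN (hT : G.IsTree) (r : V) :
    ∀ (s : ℕ) (x : V), (∀ j < s, (par hT r)^[j] x ≠ r) →
      (Sset hT r x s).ncard ≤ Lc hT r x s + 1 := by
  intro s
  induction s with
  | zero => intro x _; simp [Sset_zero]
  | succ s ih =>
    intro x hC
    have hx : x ≠ r := by simpa using hC 0 (Nat.succ_pos s)
    have hC' : ∀ j < s, (par hT r)^[j] (par hT r x) ≠ r := by
      intro j hj
      have := hC (j + 1) (by omega)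
      rwa [Function.iterate_succ_apply] at this
    rw [Sset_succ]
    by_cases hl : x ≠ hvy hT r (par hT r x)
    · calc (insert (rt hT r x) (Sset hT r (par hT r x) s)).ncard
          ≤ (Sset hT r (par hT r x) s).ncard + 1 :=
            Set.ncard_insert_le _ _
        _ ≤ Lc hT r (par hT r x) s + 1 + 1 := by
            have := ih (par hT r x) hC'; omega
        _ = Lc hT r x (s + 1) + 1 := by rw [Lc, if_pos ⟨hx, hl⟩]; omega
    · push_neg at hl
      rcases Nat.eq_zero_or_pos s with hs | hs
      · subst hs
        rw [Sset_zero]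
        simp only [LawfulSingleton.insert_empty_eq]
        rw [Set.ncard_singleton]
        omega
      · have hmem : rt hT r x ∈ Sset hT r (par hT r x) s := by
          refine ⟨0, hs, ?_⟩
          rw [Function.iterate_zero_apply]
          exact rt_heavy hT hx hl
        rw [Set.insert_eq_self.mpr hmem]
        calc (Sset hT r (par hT r x) s).ncard ≤ Lc hT r (par hT r x) s + 1 :=
              ih (par hT r x) hC'
          _ ≤ Lc hT r x (s + 1) + 1 := by rw [Lc]; omega

lemma CN' (hT : G.IsTree) (r : V) :
    ∀ (s : ℕ) (x : V), (∀ j < s, (par hT r)^[j] x ≠ r) → 1 ≤ s →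
      ((par hT r)^[s-1] x ≠ hvy hT r (par hT r ((par hT r)^[s-1] x))) →
      (Sset hT r x s).ncard ≤ Lc hT r x s := by
  intro s
  induction s with
  | zero => intro x _ h; omega
  | succ s ih =>
    intro x hC _ htop
    have hx : x ≠ r := by simpa using hC 0 (Nat.succ_pos s)
    have hC' : ∀ j < s, (par hT r)^[j] (par hT r x) ≠ r := by
      intro j hj
      have := hC (j + 1) (by omega)
      rwa [Function.iterate_succ_apply] at this
    rw [Sset_succ]
    rcases Nat.eq_zero_or_pos s with hs | hs
    · subst hs
      simp only [Nat.sub_self, Function.iterate_zero_apply] at htop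
      rw [Sset_zero]
      simp only [LawfulSingleton.insert_empty_eq]
      rw [Set.ncard_singleton, Lc, if_pos ⟨hx, htop⟩]
      omega
    · have htop' : (par hT r)^[s-1] (par hT r x)
          ≠ hvy hT r (par hT r ((par hT r)^[s-1] (par hT r x))) := by
        have h1 : (par hT r)^[s-1] (par hT r x) = (par hT r)^[s+1-1] x := by
          rw [← Function.iterate_succ_apply]
          congr 1
          omega
        rw [h1]
        exact htop
      have hrec := ih (par hT r x) hC' hs htop'
      by_cases hl : x ≠ hvy hT r (par hT r x)
      · calc (insert (rt hT r x) (Sset hT r (par hT r x) s)).ncard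
            ≤ (Sset hT r (par hT r x) s).ncard + 1 := Set.ncard_insert_le _ _
          _ ≤ Lc hT r (par hT r x) s + 1 := by omega
          _ = Lc hT r x (s + 1) := by rw [Lc, if_pos ⟨hx, hl⟩]; omega
      · push_neg at hl
        have hmem : rt hT r x ∈ Sset hT r (par hT r x) s := by
          refine ⟨0, hs, ?_⟩
          rw [Function.iterate_zero_apply]
          exact rt_heavy hT hx hl
        rw [Set.insert_eq_self.mpr hmem]
        calc (Sset hT r (par hT r x) s).ncard ≤ Lc hT r (par hT r x) s := hrec
          _ ≤ Lc hT r x (s + 1) := by rw [Lc]; omega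

lemma Lc_le_clog (hT : G.IsTree) (r : V) (s : ℕ) (x : V)
    (hC : ∀ j < s, (par hT r)^[j] x ≠ r) :
    Lc hT r x s ≤ Nat.clog 2 (Fintype.card V) := by
  have h1 := SZ hT r s x hC
  have h2 : sz hT r ((par hT r)^[s] x) ≤ Fintype.card V := sz_le_card hT r _
  have h3 : 1 ≤ sz hT r x := sz_pos hT r x
  have h4 : 2 ^ Lc hT r x s ≤ Fintype.card V := by
    calc 2 ^ Lc hT r x s = 2 ^ Lc hT r x s * 1 := by ring
      _ ≤ 2 ^ Lc hT r x s * sz hT r x := Nat.mul_le_mul_left _ h3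
      _ ≤ Fintype.card V := le_trans h1 h2
  have h5 : Fintype.card V ≤ 2 ^ Nat.clog 2 (Fintype.card V) :=
    Nat.le_pow_clog (by norm_num) _
  have := le_trans h4 h5
  exact (Nat.pow_le_pow_iff_right (by norm_num)).mp this

lemma getVert_mem_support' {u v : V} (p : G.Walk u v) {i : ℕ} (hi : i ≤ p.length) :
    p.getVert i ∈ p.support :=
  Walk.mem_support_iff_exists_getVert.mpr ⟨i, rfl, hi⟩

lemma IsPath.getVert_inj {u v : V} {p : G.Walk u v} (hp : p.IsPath) :
    ∀ {i j : ℕ}, i ≤ p.length → j ≤ p.length → p.getVert i = p.getVert j → i = j := by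
  induction p with
  | nil => intro i j hi hj _; simp at hi hj; omega
  | cons h q ihq =>
    intro i j hi hj hij
    rw [Walk.cons_isPath_iff] at hp
    match i, j with
    | 0, 0 => rfl
    | 0, j + 1 =>
      exfalso
      rw [Walk.getVert_zero, Walk.getVert_cons_succ] at hij
      exact hp.2 (hij ▸ getVert_mem_support' q (by simpa using hj))
    | i + 1, 0 =>
      exfalso
      rw [Walk.getVert_zero, Walk.getVert_cons_succ] at hij
      exact hp.2 (hij ▸ getVert_mem_support' q (by simpa using hi))
    | i + 1, j + 1 =>
      rw [Walk.getVert_cons_succ, Walk.getVert_cons_succ] at hij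
      have := ihq hp.1 (by simpa using hi) (by simpa using hj) hij
      omega

lemma mem_edges_iff_getVert {u v : V} (p : G.Walk u v) (e : Sym2 V) :
    e ∈ p.edges ↔ ∃ i < p.length, e = s(p.getVert i, p.getVert (i + 1)) := by
  induction p with
  | nil => simp
  | cons h q ihq =>
    rw [Walk.edges_cons, List.mem_cons, ihq]
    constructor
    · rintro (rfl | ⟨i, hi, rfl⟩)
      · exact ⟨0, by simp, by simp [Walk.getVert_cons_succ]⟩
      · exact ⟨i + 1, by simp; omega, by rw [Walk.getVert_cons_succ, Walk.getVert_cons_succ]⟩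
    · rintro ⟨i, hi, rfl⟩
      cases i with
      | zero => left; simp [Walk.getVert_cons_succ]
      | succ i =>
        right
        refine ⟨i, by simp at hi; omega, ?_⟩
        rw [Walk.getVert_cons_succ, Walk.getVert_cons_succ]

lemma updown (hT : G.IsTree) (r : V) {u v : V} (p : G.Walk u v) (hp : p.IsPath) :
    ∃ s ≤ p.length,
      (∀ i < s, p.getVert i ≠ r ∧ par hT r (p.getVert i) = p.getVert (i + 1)) ∧
      (∀ i, s ≤ i → i < p.length →
        p.getVert (i + 1) ≠ r ∧ par hT r (p.getVert (i + 1)) = p.getVert i) := by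
  classical
  by_cases hex : ∃ i, i < p.length ∧
      (p.getVert (i + 1) ≠ r ∧ par hT r (p.getVert (i + 1)) = p.getVert i)
  · set s := Nat.find hex with hs
    obtain ⟨hsl, hsdown⟩ := Nat.find_spec hex
    have hdown : ∀ i, s ≤ i → i < p.length →
        p.getVert (i + 1) ≠ r ∧ par hT r (p.getVert (i + 1)) = p.getVert i := by
      intro i hi
      induction i, hi using Nat.le_induction with
      | base => intro _; exact hsdown
      | succ i hi ih =>
        intro hil
        have hil' : i < p.length := by omega
        have hdi := ih hil'
        have hadj := p.adj_getVert_succ (by omega : i + 1 < p.length)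
        rcases adj_parent_or hT r hadj with hup | hdn
        · exfalso
          have : p.getVert (i + 2) = p.getVert i := by
            rw [← hup.2, hdi.2]
          have := IsPath.getVert_inj hp (by omega) (by omega) this
          omega
        · exact hdn
    refine ⟨s, by omega, ?_, hdown⟩
    intro i hi
    have hil : i < p.length := by omega
    have hadj := p.adj_getVert_succ hil
    rcases adj_parent_or hT r hadj with hup | hdn
    · exact hup
    · exact absurd ⟨hil, hdn⟩ (Nat.find_min hex hi)
  · refine ⟨p.length, le_refl _, ?_, by omega⟩
    intro i hi
    have hadj := p.adj_getVert_succ hi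
    rcases adj_parent_or hT r hadj with hup | hdn
    · exact hup
    · exfalso
      push_neg at hex
      exact hex i hi hdn.1 hdn.2

lemma width_bound (hT : G.IsTree) (r : V) {u v : V} (p : G.Walk u v) (hp : p.IsPath) :
    {h : V | rt hT r h = h ∧ ∃ e, e ∈ (Qof hT r h).edges ∧ e ∈ p.edges}.ncard ≤
      2 * Nat.clog 2 (Fintype.card V) + 1 := by
  obtain ⟨s, hsle, hup, hdown⟩ := updown hT r p hp
  set ℓ := p.length with hℓ
  set t := ℓ - s with ht
  -- the upward chain from u
  have hchainU : ∀ j ≤ s, p.getVert j = (par hT r)^[j] u := by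
    intro j hj
    induction j with
    | zero => simp
    | succ j ih =>
      have hj' : j ≤ s := by omega
      rw [Function.iterate_succ_apply', ← ih hj', ← (hup j (by omega)).2]
  have hchainV : ∀ j ≤ t, p.getVert (ℓ - j) = (par hT r)^[j] v := by
    intro j hj
    induction j with
    | zero => rw [Nat.sub_zero, Function.iterate_zero_apply]; exact p.getVert_length
    | succ j ih =>
      have hj' : j ≤ t := by omega
      have hi : s ≤ ℓ - j - 1 := by omega
      have hi2 : ℓ - j - 1 < ℓ := by omega
      have hd := hdown (ℓ - j - 1) hi hi2
      have he : ℓ - j - 1 + 1 = ℓ - j := by omega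
      rw [he] at hd
      rw [Function.iterate_succ_apply', ← ih hj', hd.2]
      have hee : ℓ - (j + 1) = ℓ - j - 1 := by omega
      rw [hee]
  have hCu : ∀ j < s, (par hT r)^[j] u ≠ r := by
    intro j hj
    rw [← hchainU j (by omega)]
    exact (hup j hj).1
  have hCv : ∀ j < t, (par hT r)^[j] v ≠ r := by
    intro j hj
    rw [← hchainV j (by omega)]
    have hi : s ≤ ℓ - j - 1 := by omega
    have hi2 : ℓ - j - 1 < ℓ := by omega
    have hd := hdown (ℓ - j - 1) hi hi2
    have he : ℓ - j - 1 + 1 = ℓ - j := by omega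
    rw [he] at hd
    exact hd.1
  -- inclusion into the two Ssets
  have hsub : {h : V | rt hT r h = h ∧ ∃ e, e ∈ (Qof hT r h).edges ∧ e ∈ p.edges}
      ⊆ Sset hT r u s ∪ Sset hT r v t := by
    rintro h ⟨hhead, e, heQ, hep⟩
    obtain ⟨i, hi, rfl⟩ := (mem_edges_iff_getVert p e).mp hep
    obtain ⟨y, hy1, hy2, hy3⟩ := (Qof_edges_iff hT hhead _).mp heQ
    by_cases his : i < s
    · left
      have hx := hup i his
      have hxy : y = p.getVert i := by
        apply child_repr_unique hT hy1 hx.1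
        rw [← hy3, hx.2, Sym2.eq_swap]
      refine ⟨i, his, ?_⟩
      rw [← hy2, hxy, hchainU i (by omega)]
    · right
      push_neg at his
      have hd := hdown i his hi
      have hxy : y = p.getVert (i + 1) := by
        apply child_repr_unique hT hy1 hd.1
        rw [← hy3, hd.2]
      refine ⟨ℓ - (i + 1), by omega, ?_⟩
      have : p.getVert (ℓ - (ℓ - (i+1))) = (par hT r)^[ℓ - (i+1)] v :=
        hchainV (ℓ - (i+1)) (by omega)
      rw [← this, ← hy2, hxy]
      congr 2
      omega
  have hfin : (Sset hT r u s ∪ Sset hT r v t).Finite := Set.toFinite _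
  have hcard := Set.ncard_le_ncard hsub hfin
  have hunion := Set.ncard_union_le (Sset hT r u s) (Sset hT r v t)
  have hclog := Nat.clog 2 (Fintype.card V)
  -- case analysis
  rcases Nat.eq_zero_or_pos s with hs0 | hs0
  · -- upward side empty
    have h1 : (Sset hT r u s).ncard = 0 := by rw [hs0, Sset_zero]; simp
    have h2 := CN hT r t v hCv
    have h3 := Lc_le_clog hT r t v hCv
    omega
  · rcases Nat.eq_zero_or_pos t with ht0 | ht0
    · have h1 : (Sset hT r v t).ncard = 0 := by rw [ht0, Sset_zero]; simp
      have h2 := CN hT r s u hCu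
      have h3 := Lc_le_clog hT r s u hCu
      omega
    · -- both sides nonempty: the two top vertices are distinct children of getVert s
      have htopu : (par hT r)^[s-1] u = p.getVert (s-1) := (hchainU (s-1) (by omega)).symm
      have htopv : (par hT r)^[t-1] v = p.getVert (s+1) := by
        have := hchainV (t-1) (by omega)
        have he : ℓ - (t - 1) = s + 1 := by omega
        rw [he] at this
        exact this.symm
      have hu1 := hup (s-1) (by omega)
      have he1 : s - 1 + 1 = s := by omega
      rw [he1] at hu1
      have hd1 := hdown s (le_refl _) (by omega)
      have hne : p.getVert (s-1) ≠ p.getVert (s+1) := by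
        intro hcontra
        have := IsPath.getVert_inj hp (by omega : s - 1 ≤ p.length)
          (by omega : s + 1 ≤ p.length) hcontra
        omega
      have hcase : p.getVert (s-1) ≠ hvy hT r (p.getVert s)
          ∨ p.getVert (s+1) ≠ hvy hT r (p.getVert s) := by
        by_contra hcon
        push_neg at hcon
        exact hne (hcon.1.trans hcon.2.symm)
      have h3u := Lc_le_clog hT r s u hCu
      have h3v := Lc_le_clog hT r t v hCv
      rcases hcase with hc | hc
      · have hcnu := CN' hT r s u hCu hs0 (by
          rw [htopu, hu1.2]
          exact hc)
        have hcnv := CN hT r t v hCv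
        omega
      · have hcnv := CN' hT r t v hCv ht0 (by
          rw [htopv, hd1.2]
          exact hc)
        have hcnu := CN hT r s u hCu
        omega

end PD


open PD

/-- Every tree on `n` vertices admits a rooted path decomposition of width at most
`2⌈log₂ n⌉ + 1`: there is a partition of the edge set into edge-disjoint paths
`Q i : G.Walk (A i) (B i)`, rooted at some root `r` in the sense that the endpoint `A i`
of each path is an ancestor (w.r.t. `r`) of every vertex on the path — i.e. the least
common ancestor of the vertices of `Q i` is the endpoint `A i` — and every path in the
tree shares an edge with at most `2⌈log₂ n⌉ + 1` of the paths of the partition. -/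
theorem stmt2 {V : Type*} [Fintype V] (G : SimpleGraph V) (hT : G.IsTree) :
    ∃ (r : V) (k : ℕ) (A B : Fin k → V) (Q : ∀ i, G.Walk (A i) (B i)),
      (∀ i, (Q i).IsPath) ∧
      (∀ i, 0 < (Q i).length) ∧
      -- the edge sets of the `Q i` partition the edge set of `G`
      (∀ e ∈ G.edgeSet, ∃! i, e ∈ (Q i).edges) ∧
      -- rootedness: `A i` is an ancestor of every vertex of `Q i`
      (∀ i, ∀ v ∈ (Q i).support, ∀ (w : G.Walk r v), w.IsPath → A i ∈ w.support) ∧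
      -- width bound
      (∀ (u v : V) (p : G.Walk u v), p.IsPath →
        {i : Fin k | ∃ e, e ∈ (Q i).edges ∧ e ∈ p.edges}.ncard ≤
          2 * Nat.clog 2 (Fintype.card V) + 1) := by
  classical
  obtain ⟨r⟩ := hT.isConnected.nonempty
  set heads : Finset V :=
    Finset.univ.filter (fun h => rt hT r h = h ∧ 0 < (Qof hT r h).length) with hheads
  have hheads_mem : ∀ h : V, h ∈ heads ↔ rt hT r h = h ∧ 0 < (Qof hT r h).length := by
    intro h; simp [hheads]
  set k := heads.card with hk
  set eqv : {h // h ∈ heads} ≃ Fin k := Fintype.equivFinOfCardEq (Fintype.card_coe heads)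
    with heqv
  set φ : Fin k → V := fun i => (eqv.symm i : V) with hφ
  have hφ_inj : Function.Injective φ :=
    Subtype.coe_injective.comp eqv.symm.injective
  have hφ_mem : ∀ i, φ i ∈ heads := fun i => (eqv.symm i).2
  refine ⟨r, k, fun i => Aof hT r (φ i), fun i => Bof hT r (φ i),
    fun i => Qof hT r (φ i), ?_, ?_, ?_, ?_, ?_⟩
  · intro i; exact Qof_isPath hT r (φ i)
  · intro i; exact ((hheads_mem _).mp (hφ_mem i)).2
  · -- partition
    intro e he
    induction e using Sym2.ind with
    | _ a b =>
      rw [SimpleGraph.mem_edgeSet] at he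
      obtain ⟨x, hx, hrepr⟩ : ∃ x, x ≠ r ∧ s(a, b) = s(par hT r x, x) := by
        rcases adj_parent_or hT r he with ⟨ha, hpa⟩ | ⟨hb, hpb⟩
        · exact ⟨a, ha, by rw [← hpa, Sym2.eq_swap]⟩
        · exact ⟨b, hb, by rw [← hpb]⟩
      set h := rt hT r x with hh
      have hhead : rt hT r h = h := by rw [hh]; exact rt_cases hT r x
      have hmem : s(a, b) ∈ (Qof hT r h).edges :=
        (Qof_edges_iff hT hhead _).mpr ⟨x, hx, rfl, hrepr⟩
      have hlen : 0 < (Qof hT r h).length := by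
        have h1 : (Qof hT r h).edges ≠ [] := List.ne_nil_of_mem hmem
        have h2 := (Qof hT r h).length_edges
        cases hQe : (Qof hT r h).edges with
        | nil => exact absurd hQe h1
        | cons x xs => rw [hQe] at h2; simp at h2; omega
      have hin : h ∈ heads := (hheads_mem h).mpr ⟨hhead, hlen⟩
      have key : φ (eqv ⟨h, hin⟩) = h := by
        simp [hφ]
      refine ⟨eqv ⟨h, hin⟩, ?_, ?_⟩
      · show s(a, b) ∈ (Qof hT r (φ (eqv ⟨h, hin⟩))).edges
        rw [key]
        exact hmem
      · intro j hj
        have hj' : s(a, b) ∈ (Qof hT r (φ j)).edges := hj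
        have hheadj : rt hT r (φ j) = φ j := ((hheads_mem _).mp (hφ_mem j)).1
        have hjh : φ j = h := Qof_mem_unique hT hheadj hhead hj' hmem
        apply hφ_inj
        rw [hjh, key]
  · -- rootedness
    intro i v hv w hw
    have hanc : Aof hT r (φ i) ∈ (pth hT r v).support := Qof_support_anc hT r (φ i) v hv
    have hwrev : w.reverse = pth hT r v := pth_unique hT r v w.reverse hw.reverse
    rw [← hwrev, SimpleGraph.Walk.support_reverse, List.mem_reverse] at hanc
    exact hanc
  · -- width
    intro u v p hp
    have hmain := width_bound hT r p hp
    set S := {i : Fin k | ∃ e, e ∈ (Qof hT r (φ i)).edges ∧ e ∈ p.edges} with hS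
    have himg : φ '' S ⊆
        {h : V | rt hT r h = h ∧ ∃ e, e ∈ (Qof hT r h).edges ∧ e ∈ p.edges} := by
      rintro _ ⟨i, hi, rfl⟩
      exact ⟨((hheads_mem _).mp (hφ_mem i)).1, hi⟩
    calc S.ncard = (φ '' S).ncard := (Set.ncard_image_of_injective S hφ_inj).symm
      _ ≤ _ := Set.ncard_le_ncard himg (Set.toFinite _)
      _ ≤ 2 * Nat.clog 2 (Fintype.card V) + 1 := hmain
end

section
/- Let T be a tree rooted at r with rooted path decomposition 𝒫, let ℓ = (u,v) be a link, and let Q ∈ 𝒫 be a path of the decomposition for which ℓ is Q-non-rooted. Then the least common ancestor of u and v lies on Q and is not an endpoint of Q. -/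
/-!
Measure depth by `G.dist r`. The tree path `Q i` descends from its root `A i`, and `P(u,v)` climbs
from `u` to the least common ancestor `w` and then descends to `v`; hence every vertex of `Q i`
other than `A i`, and every vertex of `P(u,v)` other than `w`, is joined to its parent by an edge of
the same path. Take a vertex `x` of minimal depth among the endpoints of edges shared by the two
paths; `x ≠ A i` by non-rootedness. If `x ≠ w`, the edge from `x` to its (unique) parent lies on
both paths, and its other endpoint is shallower. So `x = w`, and `x ≠ B i` because the shared edge
at `x` leads to a vertex of `Q i` that is not shallower, while `B i` is the deepest vertex of `Q i`.
-/

namespace SimpleGraph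

variable {V : Type*} {G : SimpleGraph V}

open Walk

theorem IsAcyclic.length_eq_dist (hG : G.IsAcyclic) {u v : V} {p : G.Walk u v}
    (hp : p.IsPath) : p.length = G.dist u v := by
  obtain ⟨q, hq, hlen⟩ := p.reachable.exists_path_of_dist
  rw [← hlen, Subtype.mk.inj (hG.subsingleton_path u v |>.elim ⟨p, hp⟩ ⟨q, hq⟩)]

theorem IsAcyclic.dist_add_dist_of_mem_support (hG : G.IsAcyclic) {u v x : V} {p : G.Walk u v}
    (hp : p.IsPath) (hx : x ∈ p.support) : G.dist u x + G.dist x v = G.dist u v := by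
  classical
  rw [← hG.length_eq_dist (hp.takeUntil hx), ← hG.length_eq_dist (hp.dropUntil hx),
    ← hG.length_eq_dist hp, ← length_append, take_spec]

theorem Connected.dist_add_dist_of_between (hG : G.Connected) {r w x u : V}
    (hw : G.dist r w + G.dist w u = G.dist r u) (hx : G.dist w x + G.dist x u = G.dist w u) :
    G.dist r w + G.dist w x = G.dist r x := by
  have := hG.dist_triangle (u := r) (v := x) (w := u)
  have := hG.dist_triangle (u := r) (v := w) (w := x)
  omega

theorem IsAcyclic.exists_mem_edges_dist_add_one (hG : G.IsAcyclic) {u v x : V} {p : G.Walk u v}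
    (hp : p.IsPath) (hx : x ∈ p.support) (hxu : x ≠ u) :
    ∃ y, s(y, x) ∈ p.edges ∧ G.dist u y + 1 = G.dist u x := by
  classical
  set t := p.takeUntil x hx
  have ht : ¬t.Nil := not_nil_of_ne hxu.symm
  have hyt : s(t.penultimate, x) ∈ t.edges := mk_penultimate_end_mem_edges ht
  refine ⟨t.penultimate, edges_takeUntil_subset_edges p hx hyt, ?_⟩
  rw [← hG.dist_add_dist_of_mem_support (hp.takeUntil hx) (t.fst_mem_support_of_mem_edges hyt),
    dist_eq_one_iff_adj.mpr (adj_penultimate ht)]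

theorem IsTree.exists_mem_edges_dist_add_one (hG : G.IsTree) {r w u x : V} {s : G.Walk w u}
    (hs : s.IsPath) (hw : G.dist r w + G.dist w u = G.dist r u) (hx : x ∈ s.support)
    (hxw : x ≠ w) : ∃ y, s(y, x) ∈ s.edges ∧ G.dist r y + 1 = G.dist r x := by
  obtain ⟨y, hy, hdy⟩ := hG.isAcyclic.exists_mem_edges_dist_add_one hs hx hxw
  have hrx := hG.connected.dist_add_dist_of_between hw
    (hG.isAcyclic.dist_add_dist_of_mem_support hs hx)
  have hry := hG.connected.dist_add_dist_of_between hw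
    (hG.isAcyclic.dist_add_dist_of_mem_support hs (s.fst_mem_support_of_mem_edges hy))
  exact ⟨y, hy, by omega⟩

theorem IsTree.eq_penultimate_of_dist_add_one (hG : G.IsTree) {r x y : V} {q : G.Walk r x}
    (hq : q.IsPath) (hadj : G.Adj y x) (hdy : G.dist r y + 1 = G.dist r x) :
    y = q.penultimate := by
  classical
  obtain ⟨q', hq', hlen⟩ := (hG.connected r y).exists_path_of_dist
  have hx : x ∉ q'.support := fun hx => by
    have := dist_le (q'.takeUntil x hx)
    have := q'.length_takeUntil_le_length hx
    omega
  exact hG.isAcyclic.eq_penultimate_of_adj_end hq hadj.symm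
    (hG.isAcyclic.mem_support_of_ne_mem_support_of_adj_of_isPath hq hq' hadj.symm hx)

theorem IsTree.eq_of_adj_of_dist_add_one (hG : G.IsTree) {r x y y' : V} (hy : G.Adj y x)
    (hy' : G.Adj y' x) (hdy : G.dist r y + 1 = G.dist r x) (hdy' : G.dist r y' + 1 = G.dist r x) :
    y = y' := by
  obtain ⟨q, hq⟩ := hG.connected.exists_isPath r x
  rw [hG.eq_penultimate_of_dist_add_one hq hy hdy, hG.eq_penultimate_of_dist_add_one hq hy' hdy']

theorem IsTree.dist_le_of_mem_support (hG : G.IsTree) {r w u x : V} {s : G.Walk w u}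
    (hs : s.IsPath) (hw : G.dist r w + G.dist w u = G.dist r u) (hx : x ∈ s.support) :
    G.dist r x ≤ G.dist r u := by
  have hwx := hG.isAcyclic.dist_add_dist_of_mem_support hs hx
  have := hG.connected.dist_add_dist_of_between hw hwx
  omega

theorem IsTree.exists_mem_edges_dist_add_one_of_apex (hG : G.IsTree) {r u v w x : V}
    {p : G.Walk u v} (hp : p.IsPath) (hwp : w ∈ p.support)
    (hwu : G.dist r w + G.dist w u = G.dist r u) (hwv : G.dist r w + G.dist w v = G.dist r v)
    (hx : x ∈ p.support) (hxw : x ≠ w) :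
    ∃ y, s(y, x) ∈ p.edges ∧ G.dist r y + 1 = G.dist r x := by
  classical
  rw [← p.take_spec hwp, mem_support_append_iff] at hx
  rcases hx with hx | hx
  · obtain ⟨y, hy, hdy⟩ := hG.exists_mem_edges_dist_add_one (r := r) (hp.takeUntil hwp).reverse
      hwu (by rwa [support_reverse, List.mem_reverse]) hxw
    rw [edges_reverse, List.mem_reverse] at hy
    exact ⟨y, edges_takeUntil_subset_edges p hwp hy, hdy⟩
  · obtain ⟨y, hy, hdy⟩ := hG.exists_mem_edges_dist_add_one (hp.dropUntil hwp) hwv hx hxw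
    exact ⟨y, edges_dropUntil_subset_edges p hwp hy, hdy⟩

end SimpleGraph

theorem stmt4_general {V : Type*} (G : SimpleGraph V) (hT : G.IsTree) (r : V)
    (k : ℕ) (A B : Fin k → V) (Q : ∀ i, G.Walk (A i) (B i))
    (hpath : ∀ i, (Q i).IsPath)
    (hrooted : ∀ i, ∀ w ∈ (Q i).support, ∀ (q : G.Walk r w), q.IsPath → A i ∈ q.support)
    (u v : V) (p : G.Walk u v) (hp : p.IsPath)
    (i : Fin k)
    (hiedge : ∃ e, e ∈ p.edges ∧ e ∈ (Q i).edges)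
    (hinonrooted : ∀ e ∈ p.edges, e ∈ (Q i).edges → A i ∉ e)
    -- `w` is the least common ancestor of `u` and `v`
    (w : V) (pru : G.Walk r u) (hpru : pru.IsPath) (prv : G.Walk r v) (hprv : prv.IsPath)
    (hw : w ∈ pru.support ∧ w ∈ prv.support ∧ w ∈ p.support) :
    w ∈ (Q i).support ∧ w ≠ A i ∧ w ≠ B i := by
  obtain ⟨hwu, hwv, hwp⟩ := hw
  have hQ : G.dist r (A i) + G.dist (A i) (B i) = G.dist r (B i) := by
    obtain ⟨q, hq⟩ := hT.connected.exists_isPath r (B i)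
    exact hT.isAcyclic.dist_add_dist_of_mem_support hq (hrooted i _ (Q i).end_mem_support q hq)
  obtain ⟨x, ⟨z, hxzp, hxzQ⟩, hmin⟩ := (measure (G.dist r)).wf.has_min
    {x | ∃ z, s(x, z) ∈ p.edges ∧ s(x, z) ∈ (Q i).edges}
    (by obtain ⟨⟨x, z⟩, he⟩ := hiedge; exact ⟨x, z, he⟩)
  have hxA : x ≠ A i := fun h => hinonrooted _ hxzp hxzQ (h ▸ Sym2.mem_mk_left _ _)
  have hxw : x = w := by
    by_contra hxw
    obtain ⟨y, hyp, hdy⟩ := hT.exists_mem_edges_dist_add_one_of_apex hp hwp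
      (hT.isAcyclic.dist_add_dist_of_mem_support hpru hwu)
      (hT.isAcyclic.dist_add_dist_of_mem_support hprv hwv)
      (p.fst_mem_support_of_mem_edges hxzp) hxw
    obtain ⟨y', hyQ, hdy'⟩ := hT.exists_mem_edges_dist_add_one (hpath i) hQ
      ((Q i).fst_mem_support_of_mem_edges hxzQ) hxA
    obtain rfl := hT.eq_of_adj_of_dist_add_one (p.adj_of_mem_edges hyp)
      ((Q i).adj_of_mem_edges hyQ) hdy hdy'
    exact hmin y ⟨x, hyp, hyQ⟩ (show G.dist r y < G.dist r x by omega)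
  rw [← hxw]
  refine ⟨(Q i).fst_mem_support_of_mem_edges hxzQ, hxA, ?_⟩
  rintro rfl
  have hz : ¬G.dist r z < G.dist r (B i) :=
    hmin z ⟨B i, Sym2.eq_swap ▸ hxzp, Sym2.eq_swap ▸ hxzQ⟩
  have := hT.dist_le_of_mem_support (hpath i) hQ ((Q i).snd_mem_support_of_mem_edges hxzQ)
  exact hT.dist_ne_of_adj r (p.adj_of_mem_edges hxzp) (by omega)

/-- Let `T` be a tree rooted at `r` with a rooted path decomposition `Q` and let
`ℓ = (u,v)` be a link.  Suppose `ℓ` is `Q i`-non-rooted: the tree path `p = P(u,v)`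
shares an edge with `Q i`, but the root `A i` of `Q i` is incident to no common edge
(so `A i` is not an endpoint of the intersection path).  Then the least common ancestor
`w` of `u` and `v` (characterized as the vertex lying on the tree paths `r–u`, `r–v`
and `u–v` simultaneously) lies on `Q i` and is not an endpoint of `Q i`. -/
theorem stmt4 {V : Type*} [Fintype V] (G : SimpleGraph V) (hT : G.IsTree) (r : V)
    (k : ℕ) (A B : Fin k → V) (Q : ∀ i, G.Walk (A i) (B i))
    (hpath : ∀ i, (Q i).IsPath)
    (hpartition : ∀ e ∈ G.edgeSet, ∃! i, e ∈ (Q i).edges)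
    (hrooted : ∀ i, ∀ w ∈ (Q i).support, ∀ (q : G.Walk r w), q.IsPath → A i ∈ q.support)
    (u v : V) (huv : u ≠ v) (p : G.Walk u v) (hp : p.IsPath)
    (i : Fin k)
    (hiedge : ∃ e, e ∈ p.edges ∧ e ∈ (Q i).edges)
    (hinonrooted : ∀ e ∈ p.edges, e ∈ (Q i).edges → A i ∉ e)
    -- `w` is the least common ancestor of `u` and `v`
    (w : V) (pru : G.Walk r u) (hpru : pru.IsPath) (prv : G.Walk r v) (hprv : prv.IsPath)
    (hw : w ∈ pru.support ∧ w ∈ prv.support ∧ w ∈ p.support) :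
    w ∈ (Q i).support ∧ w ≠ A i ∧ w ≠ B i :=
  stmt4_general G hT r k A B Q hpath hrooted u v p hp i hiedge hinonrooted w pru hpru prv hprv hw
end

section
/- Let L be a finite family of intervals (subpaths of a path) and let L' ⊆ L be a minimum-size subfamily with ⋃_{I ∈ L'} I = ⋃_{I ∈ L} I. Then for every interval I ∈ L \ L', there exist at most three intervals I₁, I₂, I₃ ∈ L' with I ⊆ I₁ ∪ I₂ ∪ I₃. -/
/-- Let `L` be a finite family of (integer) closed intervals and `L' ⊆ L` a minimum-size
subfamily covering the union of all intervals of `L`.  Then every interval `I ∈ L \ L'`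
is covered by at most three intervals of `L'`. -/
theorem stmt5 (L L' : Finset (ℤ × ℤ))
    (hL : ∀ p ∈ L, p.1 ≤ p.2)
    (hsub : L' ⊆ L)
    (hcover : (⋃ p ∈ L', Set.Icc p.1 p.2) = ⋃ p ∈ L, Set.Icc p.1 p.2)
    (hmin : ∀ M ⊆ L, (⋃ p ∈ M, Set.Icc p.1 p.2) = (⋃ p ∈ L, Set.Icc p.1 p.2) →
      L'.card ≤ M.card) :
    ∀ I ∈ L \ L', ∃ I₁ ∈ L', ∃ I₂ ∈ L', ∃ I₃ ∈ L',
      Set.Icc I.1 I.2 ⊆ Set.Icc I₁.1 I₁.2 ∪ Set.Icc I₂.1 I₂.2 ∪ Set.Icc I₃.1 I₃.2 := by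
  intro I hI
  rw [Finset.mem_sdiff] at hI
  obtain ⟨hIL, hIL'⟩ := hI
  have hab : I.1 ≤ I.2 := hL I hIL
  -- every point of `I` is covered by some interval of `L'`
  have hmem : ∀ x : ℤ, I.1 ≤ x → x ≤ I.2 → ∃ p ∈ L', p.1 ≤ x ∧ x ≤ p.2 := by
    intro x h1 h2
    have hx : x ∈ ⋃ p ∈ L, Set.Icc p.1 p.2 := by
      simp only [Set.mem_iUnion, exists_prop]
      exact ⟨I, hIL, Set.mem_Icc.2 ⟨h1, h2⟩⟩
    rw [← hcover] at hx
    simp only [Set.mem_iUnion, exists_prop, Set.mem_Icc] at hx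
    exact hx
  -- pick I₁ ∋ I.1 with max right endpoint
  obtain ⟨Ia, hIa, haIa1, haIa2⟩ := hmem I.1 le_rfl hab
  have hS1 : (L'.filter (fun p => p.1 ≤ I.1 ∧ I.1 ≤ p.2)).Nonempty :=
    ⟨Ia, Finset.mem_filter.2 ⟨hIa, haIa1, haIa2⟩⟩
  obtain ⟨I₁, hI₁mem, hI₁max⟩ := Finset.exists_max_image _ (fun p => p.2) hS1
  rw [Finset.mem_filter] at hI₁mem
  obtain ⟨hI₁L', hI₁a1, hI₁a2⟩ := hI₁mem
  have hI₁max' : ∀ p ∈ L', p.1 ≤ I.1 → I.1 ≤ p.2 → p.2 ≤ I₁.2 := by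
    intro p hp h1 h2
    exact hI₁max p (Finset.mem_filter.2 ⟨hp, h1, h2⟩)
  -- pick I₃ ∋ I.2 with min left endpoint
  obtain ⟨Ib, hIb, hbIb1, hbIb2⟩ := hmem I.2 hab le_rfl
  have hS3 : (L'.filter (fun p => p.1 ≤ I.2 ∧ I.2 ≤ p.2)).Nonempty :=
    ⟨Ib, Finset.mem_filter.2 ⟨hIb, hbIb1, hbIb2⟩⟩
  obtain ⟨I₃, hI₃mem, hI₃min⟩ := Finset.exists_min_image _ (fun p => p.1) hS3
  rw [Finset.mem_filter] at hI₃mem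
  obtain ⟨hI₃L', hI₃b1, hI₃b2⟩ := hI₃mem
  have hI₃min' : ∀ p ∈ L', p.1 ≤ I.2 → I.2 ≤ p.2 → I₃.1 ≤ p.1 := by
    intro p hp h1 h2
    exact hI₃min p (Finset.mem_filter.2 ⟨hp, h1, h2⟩)
  -- any interval of L' meeting the gap (I₁.2, I₃.1) is strictly inside (I.1, I.2)
  have hstrict : ∀ J ∈ L', ∀ x : ℤ, I₁.2 < x → x < I₃.1 → J.1 ≤ x → x ≤ J.2 →
      I.1 < J.1 ∧ J.2 < I.2 := by
    intro J hJ x hx1 hx2 hJ1 hJ2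
    constructor
    · by_contra h
      push_neg at h
      have ha2 : I.1 ≤ J.2 := by omega
      have := hI₁max' J hJ h ha2
      omega
    · by_contra h
      push_neg at h
      have hb1 : J.1 ≤ I.2 := by omega
      have := hI₃min' J hJ hb1 h
      omega
  -- two distinct intervals of L' inside I would contradict minimality
  have hswap : ∀ J ∈ L', ∀ K ∈ L', J ≠ K → I.1 ≤ J.1 → J.2 ≤ I.2 →
      I.1 ≤ K.1 → K.2 ≤ I.2 → False := by
    intro J hJ K hK hne hJ1 hJ2 hK1 hK2
    set M := insert I (L' \ {J, K}) with hM
    have hJKsub : ({J, K} : Finset (ℤ × ℤ)) ⊆ L' := by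
      intro p hp
      simp only [Finset.mem_insert, Finset.mem_singleton] at hp
      rcases hp with rfl | rfl <;> assumption
    have hJKcard : ({J, K} : Finset (ℤ × ℤ)).card = 2 := by
      rw [Finset.card_insert_of_notMem (by simpa using hne), Finset.card_singleton]
    have hMsub : M ⊆ L := by
      intro p hp
      rw [hM, Finset.mem_insert] at hp
      rcases hp with rfl | hp
      · exact hIL
      · exact hsub (Finset.mem_sdiff.1 hp).1
    have hMcover : (⋃ p ∈ M, Set.Icc p.1 p.2) = ⋃ p ∈ L, Set.Icc p.1 p.2 := by
      apply Set.Subset.antisymm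
      · intro z hz
        simp only [Set.mem_iUnion, exists_prop] at hz ⊢
        obtain ⟨p, hp, hzp⟩ := hz
        exact ⟨p, hMsub hp, hzp⟩
      · rw [← hcover]
        intro z hz
        simp only [Set.mem_iUnion, exists_prop] at hz ⊢
        obtain ⟨p, hp, hzp⟩ := hz
        by_cases hpJK : p = J ∨ p = K
        · refine ⟨I, by simp [hM], ?_⟩
          rw [Set.mem_Icc] at hzp ⊢
          rcases hpJK with rfl | rfl
          · exact ⟨by omega, by omega⟩
          · exact ⟨by omega, by omega⟩
        · push_neg at hpJK
          refine ⟨p, ?_, hzp⟩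
          rw [hM, Finset.mem_insert]
          right
          rw [Finset.mem_sdiff]
          refine ⟨hp, ?_⟩
          simp only [Finset.mem_insert, Finset.mem_singleton]
          tauto
    have h1 := hmin M hMsub hMcover
    have h2 := Finset.card_insert_le I (L' \ ({J, K} : Finset (ℤ × ℤ)))
    have h3 := Finset.card_sdiff_of_subset hJKsub
    have h4 := Finset.card_le_card hJKsub
    rw [hM] at h1
    omega
  by_cases hgap : I₃.1 ≤ I₁.2 + 1
  · -- two intervals suffice
    refine ⟨I₁, hI₁L', I₁, hI₁L', I₃, hI₃L', ?_⟩
    intro y hy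
    rw [Set.mem_Icc] at hy
    simp only [Set.mem_union, Set.mem_Icc]
    by_cases hy2 : y ≤ I₁.2
    · left; left; exact ⟨by omega, hy2⟩
    · right; exact ⟨by omega, by omega⟩
  · push_neg at hgap
    -- the point x = I₁.2 + 1 lies in the gap; take I₂ covering it
    have hx1 : I.1 ≤ I₁.2 + 1 := by omega
    have hx2 : I₁.2 + 1 ≤ I.2 := by omega
    obtain ⟨I₂, hI₂L', hI₂1, hI₂2⟩ := hmem (I₁.2 + 1) hx1 hx2
    obtain ⟨hI₂s1, hI₂s2⟩ :=
      hstrict I₂ hI₂L' (I₁.2 + 1) (by omega) (by omega) hI₂1 hI₂2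
    refine ⟨I₁, hI₁L', I₂, hI₂L', I₃, hI₃L', ?_⟩
    intro y hy
    rw [Set.mem_Icc] at hy
    simp only [Set.mem_union, Set.mem_Icc]
    by_cases hy1 : y ≤ I₁.2
    · left; left; exact ⟨by omega, hy1⟩
    by_cases hy3 : I₃.1 ≤ y
    · right; exact ⟨hy3, by omega⟩
    push_neg at hy1 hy3
    -- y is in the gap; the interval covering it must be I₂
    obtain ⟨J, hJL', hJ1, hJ2⟩ := hmem y hy.1 hy.2
    obtain ⟨hJs1, hJs2⟩ := hstrict J hJL' y hy1 hy3 hJ1 hJ2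
    by_cases hJI₂ : J = I₂
    · subst hJI₂
      left; right; exact ⟨hJ1, hJ2⟩
    · exact absurd (hswap J hJL' I₂ hI₂L' hJI₂ (le_of_lt hJs1) (le_of_lt hJs2)
        (le_of_lt hI₂s1) (le_of_lt hI₂s2)) (by simp)
end

section
/- A 0/1 matrix in which the ones in every row appear consecutively (consecutive-ones property on rows) is totally unimodular. -/
/-!
Sorting the columns of a square submatrix changes its determinant only by a sign, so we may
assume the columns are in order. Subtracting from every column its left neighbour (right
multiplication by a unitriangular matrix) turns a consecutive-ones row into a row with at most
one `1`, where the block starts, and at most one `-1`, just after it ends. The transpose of such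
a matrix has determinant in `{-1, 0, 1}`: either some column has at most one nonzero entry and
Laplace expansion along it reduces the size, or every column holds both a `1` and a `-1`, and
then the rows sum to zero.
-/

variable {R : Type*} [CommRing R]

lemma SignType.cast_eq_one_or_eq_neg_one {x : R} (hx : x ∈ Set.range SignType.cast)
    (h0 : x ≠ 0) : x = 1 ∨ x = -1 := by
  obtain ⟨s, rfl⟩ := hx
  cases s <;> simp_all

namespace Matrix

lemma sum_eq_zero_of_signs_of_two_ne_zero {ι : Type*} [Fintype ι] {v : ι → R}
    (hv : ∀ i, v i ∈ Set.range SignType.cast)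
    (hpos : ∀ i i', v i = 1 → v i' = 1 → i = i') (hneg : ∀ i i', v i = -1 → v i' = -1 → i = i')
    {i₁ i₂ : ι} (hne : i₁ ≠ i₂) (h₁ : v i₁ ≠ 0) (h₂ : v i₂ ≠ 0) : ∑ i, v i = 0 := by
  have key : ∀ a b, a ≠ b → v a = 1 → v b = -1 → ∑ i, v i = 0 := by
    intro a b hab ha hb
    rw [Fintype.sum_eq_add a b hab, ha, hb, add_neg_cancel]
    rintro c ⟨hca, hcb⟩
    by_contra hc
    rcases SignType.cast_eq_one_or_eq_neg_one (hv c) hc with hc | hc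
    exacts [hca (hpos c a hc ha), hcb (hneg c b hc hb)]
  rcases SignType.cast_eq_one_or_eq_neg_one (hv i₁) h₁ with ha | ha <;>
    rcases SignType.cast_eq_one_or_eq_neg_one (hv i₂) h₂ with hb | hb
  · exact absurd (hpos _ _ ha hb) hne
  · exact key _ _ hne ha hb
  · exact key _ _ hne.symm hb ha
  · exact absurd (hneg _ _ ha hb) hne

lemma det_eq_zero_of_sum_rows_eq_zero {n : Type*} [Fintype n] [DecidableEq n] [Nonempty n]
    {A : Matrix n n R} (h : ∀ j, ∑ i, A i j = 0) : A.det = 0 := by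
  inhabit n
  have := det_updateRow_sum A default fun _ => 1
  have hsum : ∑ i, A i = 0 := funext fun j => (Finset.sum_apply j _ _).trans (h j)
  simp only [one_smul, hsum] at this
  rw [← this, det_eq_zero_of_row_eq_zero default fun j => by simp]

lemma det_mem_range_signType_cast_of_cols_unique_signs {k : ℕ} (M : Matrix (Fin k) (Fin k) R)
    (hM : ∀ i j, M i j ∈ Set.range SignType.cast)
    (hpos : ∀ j i i', M i j = 1 → M i' j = 1 → i = i')
    (hneg : ∀ j i i', M i j = -1 → M i' j = -1 → i = i') :
    M.det ∈ Set.range SignType.cast := by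
  induction k with
  | zero => exact ⟨1, by simp⟩
  | succ k ih =>
    by_cases hsparse : ∃ j, ∀ i i', M i j ≠ 0 → M i' j ≠ 0 → i = i'
    · obtain ⟨j, hj⟩ := hsparse
      by_cases hzero : ∀ i, M i j = 0
      · exact ⟨0, by simp [det_eq_zero_of_column_eq_zero j hzero]⟩
      push Not at hzero
      obtain ⟨i₀, hi₀⟩ := hzero
      have hminor := ih (M.submatrix i₀.succAbove j.succAbove) (fun _ _ => hM _ _)
        (fun _ _ _ h h' => Fin.succAbove_right_injective (hpos _ _ _ h h'))
        (fun _ _ _ h h' => Fin.succAbove_right_injective (hneg _ _ _ h h'))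
      rw [det_succ_column M j, Fintype.sum_eq_single i₀ fun i hi => by
        rw [not_not.mp fun h => hi (hj i i₀ h hi₀), mul_zero, zero_mul]]
      change _ ∈ MonoidHom.mrange SignType.castHom.toMonoidHom
      have hsign : (-1 : R) ∈ MonoidHom.mrange SignType.castHom.toMonoidHom := ⟨-1, by simp⟩
      exact mul_mem (mul_mem (pow_mem hsign _) (hM i₀ j)) hminor
    · push Not at hsparse
      refine ⟨0, (det_eq_zero_of_sum_rows_eq_zero fun j => ?_).symm⟩
      obtain ⟨i₁, i₂, h₁, h₂, hne⟩ := hsparse j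
      exact sum_eq_zero_of_signs_of_two_ne_zero (fun i => hM i j) (hpos j) (hneg j) hne h₁ h₂

def diffMatrix (R : Type*) [Ring R] (k : ℕ) : Matrix (Fin k) (Fin k) R :=
  of fun i j => if i = j then 1 else if (i : ℕ) + 1 = j then -1 else 0

lemma det_diffMatrix (k : ℕ) : (diffMatrix R k).det = 1 := by
  rw [det_of_isUpperTriangular]
  · simp [diffMatrix]
  · intro i j hji
    have hne : i ≠ j := (Fin.ne_of_gt hji)
    have : (i : ℕ) + 1 ≠ j := by have : (j : ℕ) < i := hji; omega
    simp [diffMatrix, hne, this]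

section diffMatrix

variable {ι : Type*} {k : ℕ} (B : Matrix ι (Fin (k + 1)) R) (i : ι)

lemma mul_diffMatrix_apply_zero : (B * diffMatrix R (k + 1)) i 0 = B i 0 := by
  rw [mul_apply, Fintype.sum_eq_single 0 fun j hj => by simp [diffMatrix, hj]]
  simp [diffMatrix]

lemma mul_diffMatrix_apply_succ (j : Fin k) :
    (B * diffMatrix R (k + 1)) i j.succ = B i j.succ - B i j.castSucc := by
  rw [mul_apply, Fintype.sum_eq_add j.castSucc j.succ Fin.castSucc_lt_succ.ne]
  · simp [diffMatrix, Fin.castSucc_lt_succ.ne]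
    ring
  · rintro c ⟨hc, hc'⟩
    have : (c : ℕ) ≠ j := fun h => hc (Fin.ext h)
    simp [diffMatrix, hc', this]

end diffMatrix

structure HasConsecutiveOnesRows {m n R : Type*} [Preorder n] [Zero R] [One R]
    (A : Matrix m n R) : Prop where
  eq_zero_or_eq_one : ∀ i j, A i j = 0 ∨ A i j = 1
  eq_one_of_le_of_le : ∀ i j₁ j₂ j₃, j₁ ≤ j₂ → j₂ ≤ j₃ → A i j₁ = 1 → A i j₃ = 1 → A i j₂ = 1

namespace HasConsecutiveOnesRows

lemma submatrix {m m' n n' R : Type*} [Preorder n] [Preorder n'] [Zero R] [One R]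
    {A : Matrix m n R} (hA : A.HasConsecutiveOnesRows) (f : m' → m) {g : n' → n}
    (hg : Monotone g) : (A.submatrix f g).HasConsecutiveOnesRows :=
  ⟨fun _ _ => hA.1 _ _, fun _ _ _ _ h₁ h₂ => hA.2 _ _ _ _ (hg h₁) (hg h₂)⟩

section diffMatrix

variable {ι : Type*} {k : ℕ} {B : Matrix ι (Fin (k + 1)) ℤ}

lemma mul_diffMatrix_apply_mem (hB : B.HasConsecutiveOnesRows) (i : ι) (l : Fin (k + 1)) :
    (B * diffMatrix ℤ (k + 1)) i l ∈ Set.range SignType.cast := by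
  rw [SignType.range_eq]
  rcases Fin.eq_zero_or_eq_succ l with rfl | ⟨p, rfl⟩
  · rw [mul_diffMatrix_apply_zero]
    rcases hB.1 i 0 with h | h <;> simp [h]
  · rw [mul_diffMatrix_apply_succ]
    rcases hB.1 i p.succ with h | h <;> rcases hB.1 i p.castSucc with h' | h' <;> simp [h, h']

lemma apply_eq_one_of_mul_diffMatrix_apply_eq_one (hB : B.HasConsecutiveOnesRows) (i : ι)
    {l : Fin (k + 1)} (hl : (B * diffMatrix ℤ (k + 1)) i l = 1) : B i l = 1 := by
  rcases Fin.eq_zero_or_eq_succ l with rfl | ⟨p, rfl⟩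
  · rwa [mul_diffMatrix_apply_zero] at hl
  · rw [mul_diffMatrix_apply_succ] at hl
    rcases hB.1 i p.succ with h | h <;> rcases hB.1 i p.castSucc with h' | h' <;> omega

lemma exists_of_mul_diffMatrix_apply_eq_neg_one (hB : B.HasConsecutiveOnesRows) (i : ι)
    {l : Fin (k + 1)} (hl : (B * diffMatrix ℤ (k + 1)) i l = -1) :
    ∃ p : Fin k, l = p.succ ∧ B i p.succ = 0 ∧ B i p.castSucc = 1 := by
  rcases Fin.eq_zero_or_eq_succ l with rfl | ⟨p, rfl⟩
  · rw [mul_diffMatrix_apply_zero] at hl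
    rcases hB.1 i 0 with h | h <;> omega
  · rw [mul_diffMatrix_apply_succ] at hl
    refine ⟨p, rfl, ?_⟩
    rcases hB.1 i p.succ with h | h <;> rcases hB.1 i p.castSucc with h' | h' <;> omega

lemma mul_diffMatrix_apply_ne_one_of_lt (hB : B.HasConsecutiveOnesRows) (i : ι)
    {l l' : Fin (k + 1)} (hlt : l < l') (hl : (B * diffMatrix ℤ (k + 1)) i l = 1) :
    (B * diffMatrix ℤ (k + 1)) i l' ≠ 1 := by
  intro hl'
  obtain ⟨p, rfl⟩ := (Fin.eq_zero_or_eq_succ l').resolve_left (Fin.ne_zero_of_lt hlt)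
  have hp : B i p.castSucc = 1 :=
    hB.2 i l _ _ (Fin.le_castSucc_iff.mpr hlt) (Fin.castSucc_le_succ p)
      (hB.apply_eq_one_of_mul_diffMatrix_apply_eq_one i hl)
      (hB.apply_eq_one_of_mul_diffMatrix_apply_eq_one i hl')
  rw [mul_diffMatrix_apply_succ, hp] at hl'
  rcases hB.1 i p.succ with h | h <;> omega

lemma mul_diffMatrix_apply_ne_neg_one_of_lt (hB : B.HasConsecutiveOnesRows) (i : ι)
    {l l' : Fin (k + 1)} (hlt : l < l') (hl : (B * diffMatrix ℤ (k + 1)) i l = -1) :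
    (B * diffMatrix ℤ (k + 1)) i l' ≠ -1 := by
  intro hl'
  obtain ⟨p, rfl, hp₀, hp₁⟩ := hB.exists_of_mul_diffMatrix_apply_eq_neg_one i hl
  obtain ⟨q, rfl, -, hq₁⟩ := hB.exists_of_mul_diffMatrix_apply_eq_neg_one i hl'
  have := hB.2 i _ _ _ (Fin.castSucc_le_succ p) (Fin.le_castSucc_iff.mpr hlt) hp₁ hq₁
  omega

lemma eq_of_mul_diffMatrix_apply_eq_one (hB : B.HasConsecutiveOnesRows) (i : ι)
    {l l' : Fin (k + 1)} (hl : (B * diffMatrix ℤ (k + 1)) i l = 1)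
    (hl' : (B * diffMatrix ℤ (k + 1)) i l' = 1) : l = l' :=
  le_antisymm (not_lt.1 fun h => hB.mul_diffMatrix_apply_ne_one_of_lt i h hl' hl)
    (not_lt.1 fun h => hB.mul_diffMatrix_apply_ne_one_of_lt i h hl hl')

lemma eq_of_mul_diffMatrix_apply_eq_neg_one (hB : B.HasConsecutiveOnesRows) (i : ι)
    {l l' : Fin (k + 1)} (hl : (B * diffMatrix ℤ (k + 1)) i l = -1)
    (hl' : (B * diffMatrix ℤ (k + 1)) i l' = -1) : l = l' :=
  le_antisymm (not_lt.1 fun h => hB.mul_diffMatrix_apply_ne_neg_one_of_lt i h hl' hl)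
    (not_lt.1 fun h => hB.mul_diffMatrix_apply_ne_neg_one_of_lt i h hl hl')

end diffMatrix

lemma det_mem_range_signType_cast {k : ℕ} {B : Matrix (Fin k) (Fin k) ℤ}
    (hB : B.HasConsecutiveOnesRows) : B.det ∈ Set.range SignType.cast := by
  cases k with
  | zero => exact ⟨1, by simp⟩
  | succ k =>
    rw [← mul_one B.det, ← det_diffMatrix, ← det_mul, ← det_transpose]
    exact det_mem_range_signType_cast_of_cols_unique_signs _
      (fun l i => hB.mul_diffMatrix_apply_mem i l)
      (fun i _ _ => hB.eq_of_mul_diffMatrix_apply_eq_one i)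
      (fun i _ _ => hB.eq_of_mul_diffMatrix_apply_eq_neg_one i)

theorem isTotallyUnimodular {m n : Type*} [LinearOrder n] {A : Matrix m n ℤ}
    (hA : A.HasConsecutiveOnesRows) : A.IsTotallyUnimodular := by
  intro k f g _ _
  have hsorted : ((A.submatrix f g).submatrix id (Tuple.sort g)).det ∈ Set.range SignType.cast :=
    (hA.submatrix f (Tuple.monotone_sort g)).det_mem_range_signType_cast
  rw [det_permute'] at hsorted
  obtain ⟨s, hs⟩ := hsorted
  rcases Int.units_eq_one_or (Equiv.Perm.sign (Tuple.sort g)) with h | h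
  · exact ⟨s, by simpa [h] using hs⟩
  · exact ⟨-s, by simp [h] at hs; simp [hs]⟩

end HasConsecutiveOnesRows

end Matrix

/-- A 0/1 matrix in which the ones in every row appear consecutively (consecutive-ones
property on rows) is totally unimodular: every square submatrix has determinant
in `{-1, 0, 1}`. -/
theorem stmt8 {m n : ℕ} (A : Matrix (Fin m) (Fin n) ℤ)
    (h01 : ∀ i j, A i j = 0 ∨ A i j = 1)
    (hco : ∀ (i : Fin m) (j₁ j₂ j₃ : Fin n), j₁ ≤ j₂ → j₂ ≤ j₃ →
      A i j₁ = 1 → A i j₃ = 1 → A i j₂ = 1) :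
    ∀ (k : ℕ) (r : Fin k → Fin m) (s : Fin k → Fin n),
      Function.Injective r → Function.Injective s →
      (A.submatrix r s).det ∈ ({-1, 0, 1} : Set ℤ) := by
  intro k r s hr hs
  obtain ⟨t, ht⟩ := Matrix.HasConsecutiveOnesRows.isTotallyUnimodular ⟨h01, hco⟩ k r s hr hs
  rw [← ht]
  cases t <;> simp
end

section
/- For every B ≥ 2 and n a power of 2B, in the hierarchical path-augmentation instance where class-j links (0 ≤ j ≤ log_{2B} n) have cost B^j and cover disjoint consecutive blocks of (2B)^j edges partitioning the path: if F' is a set of links satisfying the closure property that every non-leaf link of F' \ F has all 2B of its child links in F', and every leaf link of F' lies in F, then c(F' \ F) ≤ c(F). -/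
/-!
Sort the links by class and let `a j = c(level j of F' \ F)`, `f j = c(level j of F)`.
The `2B` children of a class-`(j+1)` link of `F' \ F` are distinct class-`j` links of `F'`
of total cost `2B · B^j = 2 B^{j+1}`, and each lies in `F' \ F` or in `F`; hence
`2 a (j+1) ≤ a j + f j`. Together with `a 0 = 0` (leaves of `F'` lie in `F`), summing these
inequalities gives `∑ a ≤ ∑ f`.
-/

open Finset

/-- `c` of the class-`j` links of `S`. -/
def levelCost (B : ℕ) (S : Finset (ℕ × ℕ)) (j : ℕ) : ℕ := #{ℓ ∈ S | ℓ.1 = j} * B ^ j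

theorem sum_levelCost (B : ℕ) (S : Finset (ℕ × ℕ)) (t : Finset ℕ) :
    ∑ j ∈ t, levelCost B S j = ∑ ℓ ∈ S with ℓ.1 ∈ t, B ^ ℓ.1 := by
  rw [← sum_fiberwise_eq_sum_filter]
  refine sum_congr rfl fun j _ => ?_
  rw [levelCost, ← smul_eq_mul, ← sum_const]
  exact sum_congr rfl fun ℓ hℓ => by rw [(mem_filter.mp hℓ).2]

theorem sum_range_add_le_of_two_mul_succ_le {a f : ℕ → ℕ} (h0 : a 0 = 0)
    (hstep : ∀ j, 2 * a (j + 1) ≤ a j + f j) (n : ℕ) :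
    ∑ j ∈ range (n + 1), a j + a n ≤ ∑ j ∈ range n, f j := by
  induction n with
  | zero => simp [h0]
  | succ n ih =>
    rw [sum_range_succ a (n + 1), sum_range_succ f n]
    linarith [hstep n]

theorem two_mul_card_level_succ_le {B j : ℕ} {D T : Finset (ℕ × ℕ)}
    (hchild : ∀ ℓ ∈ D, ℓ.1 = j + 1 → ∀ t < 2 * B, (j, 2 * B * ℓ.2 + t) ∈ T) :
    2 * B * #{ℓ ∈ D | ℓ.1 = j + 1} ≤ #{ℓ ∈ T | ℓ.1 = j} := by
  rw [mul_comm, ← card_range (2 * B), ← card_product]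
  refine card_le_card_of_injOn (fun p => (j, 2 * B * p.1.2 + p.2)) ?_ ?_
  · rintro ⟨ℓ, t⟩ hp
    simp only [coe_product, Set.mem_prod, mem_coe, mem_filter, mem_range] at hp
    exact mem_filter.mpr ⟨hchild ℓ hp.1.1 hp.1.2 t hp.2, rfl⟩
  · rintro ⟨ℓ, t⟩ hp ⟨ℓ', t'⟩ hp' heq
    simp only [coe_product, Set.mem_prod, mem_coe, mem_filter, mem_range] at hp hp'
    have heq : t + 2 * B * ℓ.2 = t' + 2 * B * ℓ'.2 := by
      have := congrArg Prod.snd heq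
      dsimp only at this
      omega
    have hB : 0 < 2 * B := by omega
    obtain ⟨hdiv, hmod⟩ := (Nat.div_mod_unique hB).mpr ⟨heq, hp.2⟩
    obtain ⟨hdiv', hmod'⟩ := (Nat.div_mod_unique hB).mpr ⟨rfl, hp'.2⟩
    have hfst : ℓ.1 = ℓ'.1 := hp.1.2.trans hp'.1.2.symm
    simp only [Prod.mk.injEq]
    exact ⟨Prod.ext hfst (hdiv.symm.trans hdiv'), hmod.symm.trans hmod'⟩

theorem two_mul_levelCost_sdiff_succ_le {B : ℕ} {F F' : Finset (ℕ × ℕ)}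
    (hclosure : ∀ ℓ ∈ F', ℓ ∉ F → 1 ≤ ℓ.1 → ∀ t < 2 * B, (ℓ.1 - 1, 2 * B * ℓ.2 + t) ∈ F')
    (j : ℕ) :
    2 * levelCost B (F' \ F) (j + 1) ≤ levelCost B (F' \ F) j + levelCost B F j := by
  have hchildren : 2 * B * #{ℓ ∈ F' \ F | ℓ.1 = j + 1} ≤ #{ℓ ∈ F' | ℓ.1 = j} :=
    two_mul_card_level_succ_le fun ℓ hℓ hj t ht => by
      obtain ⟨hℓF', hℓF⟩ := mem_sdiff.mp hℓ
      simpa [hj] using hclosure ℓ hℓF' hℓF (by omega) t ht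
  have hsplit : #{ℓ ∈ F' | ℓ.1 = j} ≤ #{ℓ ∈ F' \ F | ℓ.1 = j} + #{ℓ ∈ F | ℓ.1 = j} := by
    refine (card_le_card ?_).trans (card_union_le _ _)
    rw [← filter_union]
    rw [sdiff_union_self_eq_union]
    exact filter_subset_filter _ subset_union_left
  calc 2 * levelCost B (F' \ F) (j + 1)
      = 2 * B * #{ℓ ∈ F' \ F | ℓ.1 = j + 1} * B ^ j := by rw [levelCost, pow_succ]; ring
    _ ≤ (#{ℓ ∈ F' \ F | ℓ.1 = j} + #{ℓ ∈ F | ℓ.1 = j}) * B ^ j := by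
      gcongr; exact hchildren.trans hsplit
    _ = levelCost B (F' \ F) j + levelCost B F j := add_mul _ _ _

theorem stmt15_general (B : ℕ) (F F' : Finset (ℕ × ℕ))
    (hclosure : ∀ ℓ ∈ F', ℓ ∉ F → 1 ≤ ℓ.1 →
      ∀ t < 2 * B, (ℓ.1 - 1, 2 * B * ℓ.2 + t) ∈ F')
    (hleaf : ∀ ℓ ∈ F', ℓ.1 = 0 → ℓ ∈ F) :
    ∑ ℓ ∈ F' \ F, (B : ℝ) ^ ℓ.1 ≤ ∑ ℓ ∈ F, (B : ℝ) ^ ℓ.1 := by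
  set N := F'.sup Prod.fst
  have hleaves : levelCost B (F' \ F) 0 = 0 := by
    simp only [levelCost, mul_eq_zero, card_eq_zero, filter_eq_empty_iff, mem_sdiff]
    exact Or.inl fun ℓ hℓ h0 => hℓ.2 (hleaf ℓ hℓ.1 h0)
  have hcostD : ∑ ℓ ∈ F' \ F, B ^ ℓ.1 = ∑ j ∈ range (N + 1), levelCost B (F' \ F) j := by
    rw [sum_levelCost, filter_true_of_mem]
    intro ℓ hℓ
    exact mem_range.mpr (Nat.lt_succ_of_le (le_sup (mem_sdiff.mp hℓ).1))
  have hcostF : ∑ j ∈ range N, levelCost B F j ≤ ∑ ℓ ∈ F, B ^ ℓ.1 := by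
    rw [sum_levelCost]
    exact sum_le_sum_of_subset (filter_subset _ _)
  have key := sum_range_add_le_of_two_mul_succ_le hleaves
    (two_mul_levelCost_sdiff_succ_le hclosure) N
  exact_mod_cast hcostD.trans_le ((Nat.le_add_right _ _).trans (key.trans hcostF))

/-- Hierarchical lower-bound instance: for `B ≥ 2` and `n = (2B)^m`, links are pairs
`(j, i)` (a class-`j` link of cost `B^j` covering the `i`-th block of `(2B)^j` edges),
valid when `j ≤ m` and `i < (2B)^{m-j}`; a class-`j` link `(j,i)` with `j ≥ 1` has the
`2B` child links `(j-1, 2B·i + t)`, `t < 2B`.  If `F'` satisfies the closure property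
that every non-leaf link of `F' \ F` has all `2B` of its child links in `F'`, and every
leaf (class-0) link of `F'` lies in `F`, then `c(F' \ F) ≤ c(F)`. -/
theorem stmt15 (B m : ℕ) (hB : 2 ≤ B) (F F' : Finset (ℕ × ℕ))
    (hvalidF : ∀ ℓ ∈ F, ℓ.1 ≤ m ∧ ℓ.2 < (2 * B) ^ (m - ℓ.1))
    (hvalidF' : ∀ ℓ ∈ F', ℓ.1 ≤ m ∧ ℓ.2 < (2 * B) ^ (m - ℓ.1))
    (hclosure : ∀ ℓ ∈ F', ℓ ∉ F → 1 ≤ ℓ.1 →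
      ∀ t < 2 * B, (ℓ.1 - 1, 2 * B * ℓ.2 + t) ∈ F')
    (hleaf : ∀ ℓ ∈ F', ℓ.1 = 0 → ℓ ∈ F) :
    ∑ ℓ ∈ F' \ F, (B : ℝ) ^ ℓ.1 ≤ ∑ ℓ ∈ F, (B : ℝ) ^ ℓ.1 :=
  stmt15_general B F F' hclosure hleaf
end
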